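/- arXiv:math/0503291 — 8 statements merged into one kernel-verified Lean document; each statement's English description precedes it below -/
import Mathlib

section
/- For every matrix A in SL_5(ℂ) (complex 5×5 matrices of determinant 1), all skew-symmetric matrices X_1, X_2, X_3, X_4 ∈ Alt_5, and all indices i, j, k, l, m ∈ {1,2,3,4}, one has [ijklm](A X_1 ᵗA, A X_2 ᵗA, A X_3 ᵗA, A X_4 ᵗA) = [ijklm](X_1, X_2, X_3, X_4), where ᵗA denotes the transpose of A. -/
open Matrix

noncomputable section

/-- Pfaffian of a 4×4 (skew-symmetric) complex matrix. -/
def pf4 (W : Matrix (Fin 4) (Fin 4) ℂ) : ℂ :=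
  W 0 1 * W 2 3 - W 0 2 * W 1 3 + W 0 3 * W 1 2

/-- The 4×4 matrix obtained from a 5×5 matrix by deleting the `i`-th row and column. -/
def delRC (X : Matrix (Fin 5) (Fin 5) ℂ) (i : Fin 5) : Matrix (Fin 4) (Fin 4) ℂ :=
  X.submatrix i.succAbove i.succAbove

/-- The `SL₅`-equivariant bilinear map `β : Alt₅ × Alt₅ → ℂ⁵`. -/
def betaMap (X Y : Matrix (Fin 5) (Fin 5) ℂ) : Fin 5 → ℂ := fun i =>
  (-1 : ℂ) ^ (i : ℕ) * (pf4 (delRC (X + Y) i) - pf4 (delRC X i) - pf4 (delRC Y i))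

/-- The invariant `[ijklm](X₁,X₂,X₃,X₄) = ᵗβ(Xᵢ,Xⱼ) Xₖ β(Xₗ,Xₘ)`. -/
def bracket (i j k l m : Fin 4) (X : Fin 4 → Matrix (Fin 5) (Fin 5) ℂ) : ℂ :=
  ∑ a : Fin 5, ∑ b : Fin 5, betaMap (X i) (X j) a * (X k) a b * betaMap (X l) (X m) b

/-!
`β(u ∧ v, x ∧ y)` is the cofactor vector of `u, v, x, y`: its dot product with `z` is
`det[u, v, x, y, z]`. As `A (u ∧ v) ᵗA = Au ∧ Av` and
`det[Au, …, Az] = det A · det[u, …, z]`, this gives `ᵗA β(A X ᵗA, A Y ᵗA) = det A · β(X, Y)`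
for wedges, hence on all of `Alt₅`, which wedges span, by bilinearity of `β`.
So `[ijklm] = ᵗβ Xₖ β` gets multiplied by `(det A)²`.
-/

theorem LinearMap.eqOn_span₂ {R M N P : Type*} [CommSemiring R] [AddCommMonoid M] [Module R M]
    [AddCommMonoid N] [Module R N] [AddCommMonoid P] [Module R P] {B B' : M →ₗ[R] N →ₗ[R] P}
    {s : Set M} {t : Set N} (h : ∀ x ∈ s, ∀ y ∈ t, B x y = B' x y) {x : M}
    (hx : x ∈ Submodule.span R s) {y : N} (hy : y ∈ Submodule.span R t) : B x y = B' x y := by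
  have hxt : ∀ y ∈ t, B x y = B' x y := fun y hy =>
    LinearMap.eqOn_span (f := B.flip y) (g := B'.flip y) (fun x hx => h x hx y hy) hx
  exact LinearMap.eqOn_span (f := B x) (g := B' x) hxt hy

lemma Matrix.det_of_mulVec {m R : Type*} [Fintype m] [DecidableEq m] [CommRing R]
    (A : Matrix m m R) (w : m → m → R) :
    det (of fun r => A *ᵥ w r) = A.det * det (of w) := by
  have h : (of fun r => A *ᵥ w r) = of w * Aᵀ := by
    ext r c
    simp only [of_apply, mulVec, dotProduct, mul_apply, transpose_apply, mul_comm]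
  rw [h, det_mul, det_transpose, mul_comm]

section Wedge

variable {n R : Type*} [Fintype n] [CommRing R]

def wedge (u v : n → R) : Matrix n n R := vecMulVec u v - vecMulVec v u

lemma mul_wedge_mul_transpose (A : Matrix n n R) (u v : n → R) :
    A * wedge u v * Aᵀ = wedge (A *ᵥ u) (A *ᵥ v) := by
  simp only [wedge, Matrix.mul_sub, Matrix.sub_mul, mul_vecMulVec, vecMulVec_mul, vecMul_transpose]

lemma sum_smul_wedge_single [DecidableEq n] (X : Matrix n n R) :
    ∑ a, ∑ b, X a b • wedge (Pi.single a 1) (Pi.single b 1) = X - Xᵀ := by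
  ext i j
  simp [wedge, Matrix.sum_apply, vecMulVec_apply, Pi.single_apply, mul_sub, Finset.sum_sub_distrib]

lemma mem_span_wedge_of_transpose_eq_neg [Invertible (2 : R)] {X : Matrix n n R}
    (hX : Xᵀ = -X) : X ∈ Submodule.span R {wedge u v | (u : n → R) (v : n → R)} := by
  classical
  have hX2 : X = (⅟2 : R) • ∑ a, ∑ b, X a b • wedge (Pi.single a 1) (Pi.single b 1) := by
    rw [sum_smul_wedge_single, hX, sub_neg_eq_add, ← two_smul R X, smul_smul, invOf_mul_self,
      one_smul]
  rw [hX2]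
  exact Submodule.smul_mem _ _ <| Submodule.sum_mem _ fun a _ => Submodule.sum_mem _ fun b _ =>
    Submodule.smul_mem _ _ <| Submodule.subset_span ⟨_, _, rfl⟩

end Wedge

lemma pf4_add_wedge_sub (u v x y : Fin 4 → ℂ) :
    pf4 (wedge u v + wedge x y) - pf4 (wedge u v) - pf4 (wedge x y) = det (of ![u, v, x, y]) := by
  simp [pf4, wedge, vecMulVec_apply, det_succ_row_zero, Fin.sum_univ_succ, Fin.succAbove]
  ring

lemma betaMap_wedge_apply (u v x y : Fin 5 → ℂ) (i : Fin 5) :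
    betaMap (wedge u v) (wedge x y) i = (-1) ^ (i : ℕ) *
      det (of ![u ∘ i.succAbove, v ∘ i.succAbove, x ∘ i.succAbove, y ∘ i.succAbove]) := by
  rw [← pf4_add_wedge_sub]
  rfl

lemma betaMap_wedge_dotProduct (u v x y z : Fin 5 → ℂ) :
    betaMap (wedge u v) (wedge x y) ⬝ᵥ z = det (of ![u, v, x, y, z]) := by
  rw [det_succ_row _ (Fin.last 4), dotProduct]
  refine Finset.sum_congr rfl fun j _ => ?_
  have hminor : (of ![u, v, x, y, z]).submatrix (Fin.last 4).succAbove j.succAbove =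
      of ![u ∘ j.succAbove, v ∘ j.succAbove, x ∘ j.succAbove, y ∘ j.succAbove] := by
    ext k l
    fin_cases k <;> rfl
  rw [hminor, betaMap_wedge_apply, Fin.val_last, pow_add]
  change _ = _ * z j * _
  ring

lemma transpose_mulVec_betaMap_wedge (A : Matrix (Fin 5) (Fin 5) ℂ) (u v x y : Fin 5 → ℂ) :
    Aᵀ *ᵥ betaMap (wedge (A *ᵥ u) (A *ᵥ v)) (wedge (A *ᵥ x) (A *ᵥ y)) =
      A.det • betaMap (wedge u v) (wedge x y) := by
  refine dotProduct_eq _ _ fun z => ?_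
  have hrows : of ![A *ᵥ u, A *ᵥ v, A *ᵥ x, A *ᵥ y, A *ᵥ z] =
      of fun r => A *ᵥ ![u, v, x, y, z] r := by
    ext r
    fin_cases r <;> rfl
  rw [mulVec_transpose, ← dotProduct_mulVec, betaMap_wedge_dotProduct, smul_dotProduct,
    betaMap_wedge_dotProduct, hrows, det_of_mulVec, smul_eq_mul]

def betaMapBilin :
    Matrix (Fin 5) (Fin 5) ℂ →ₗ[ℂ] Matrix (Fin 5) (Fin 5) ℂ →ₗ[ℂ] Fin 5 → ℂ := by
  refine LinearMap.mk₂ ℂ betaMap ?_ ?_ ?_ ?_ <;> intros <;> ext <;>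
  · simp only [betaMap, pf4, delRC, submatrix_apply, Matrix.add_apply, Matrix.smul_apply,
      Pi.add_apply, Pi.smul_apply, smul_eq_mul]
    ring

lemma transpose_mulVec_betaMap_conj (A : Matrix (Fin 5) (Fin 5) ℂ)
    {X Y : Matrix (Fin 5) (Fin 5) ℂ} (hX : Xᵀ = -X) (hY : Yᵀ = -Y) :
    Aᵀ *ᵥ betaMap (A * X * Aᵀ) (A * Y * Aᵀ) = A.det • betaMap X Y := by
  let conj : Matrix (Fin 5) (Fin 5) ℂ →ₗ[ℂ] Matrix (Fin 5) (Fin 5) ℂ :=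
    LinearMap.mulRight ℂ Aᵀ ∘ₗ LinearMap.mulLeft ℂ A
  refine LinearMap.eqOn_span₂ (B := (betaMapBilin.compl₁₂ conj conj).compr₂ (mulVecLin Aᵀ))
    (B' := A.det • betaMapBilin) ?_ (mem_span_wedge_of_transpose_eq_neg hX)
    (mem_span_wedge_of_transpose_eq_neg hY)
  rintro _ ⟨u, v, rfl⟩ _ ⟨x, y, rfl⟩
  change Aᵀ *ᵥ betaMap (A * wedge u v * Aᵀ) (A * wedge x y * Aᵀ) = _
  rw [mul_wedge_mul_transpose, mul_wedge_mul_transpose]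
  exact transpose_mulVec_betaMap_wedge A u v x y

lemma bracket_eq_dotProduct (i j k l m : Fin 4) (X : Fin 4 → Matrix (Fin 5) (Fin 5) ℂ) :
    bracket i j k l m X = betaMap (X i) (X j) ⬝ᵥ (X k *ᵥ betaMap (X l) (X m)) := by
  simp only [bracket, dotProduct, mulVec, Finset.mul_sum, mul_assoc]

theorem bracket_sl5_invariant (A : Matrix (Fin 5) (Fin 5) ℂ) (hA : A.det = 1)
    (X : Fin 4 → Matrix (Fin 5) (Fin 5) ℂ) (hX : ∀ t, (X t)ᵀ = -X t)
    (i j k l m : Fin 4) :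
    bracket i j k l m (fun t => A * X t * Aᵀ) = bracket i j k l m X := by
  simp only [bracket_eq_dotProduct]
  calc betaMap (A * X i * Aᵀ) (A * X j * Aᵀ) ⬝ᵥ
        ((A * X k * Aᵀ) *ᵥ betaMap (A * X l * Aᵀ) (A * X m * Aᵀ))
      = (Aᵀ *ᵥ betaMap (A * X i * Aᵀ) (A * X j * Aᵀ)) ⬝ᵥ
          (X k *ᵥ (Aᵀ *ᵥ betaMap (A * X l * Aᵀ) (A * X m * Aᵀ))) := by
        rw [← mulVec_mulVec, ← mulVec_mulVec, dotProduct_mulVec, mulVec_transpose,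
          mulVec_transpose]
    _ = (A.det • betaMap (X i) (X j)) ⬝ᵥ (X k *ᵥ (A.det • betaMap (X l) (X m))) := by
        rw [transpose_mulVec_betaMap_conj A (hX i) (hX j),
          transpose_mulVec_betaMap_conj A (hX l) (hX m)]
    _ = betaMap (X i) (X j) ⬝ᵥ (X k *ᵥ betaMap (X l) (X m)) := by
        rw [hA, one_smul, one_smul]
end
end

section
/- If the indices i, j, k, l, m ∈ {1,2,3,4} take at most two distinct values among them, then [ijklm] vanishes identically, i.e. [ijklm](X_1,X_2,X_3,X_4) = 0 for all skew-symmetric X_1, X_2, X_3, X_4 ∈ Alt_5. -/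
open Matrix

noncomputable section

/-- Auxiliary bilinear pairing. -/
def G (u : Fin 5 → ℂ) (R : Matrix (Fin 5) (Fin 5) ℂ) (v : Fin 5 → ℂ) : ℂ :=
  ∑ a : Fin 5, ∑ b : Fin 5, u a * R a b * v b

lemma skew_entries (A : Matrix (Fin 5) (Fin 5) ℂ) (hA : Aᵀ = -A) :
    (∀ p q : Fin 5, A q p = -A p q) ∧ (∀ p : Fin 5, A p p = 0) := by
  have he : ∀ p q : Fin 5, A q p = -A p q := fun p q => by
    have := congrFun (congrFun hA p) q; simpa using this
  exact ⟨he, fun p => by have := he p p; linear_combination this / 2⟩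

lemma betaMap_comm (A B : Matrix (Fin 5) (Fin 5) ℂ) : betaMap A B = betaMap B A := by
  funext i; simp only [betaMap]; rw [add_comm A B]; ring

lemma quad_zero (R : Matrix (Fin 5) (Fin 5) ℂ) (hR : Rᵀ = -R) (v : Fin 5 → ℂ) :
    G v R v = 0 := by
  obtain ⟨hRe, hRd⟩ := skew_entries R hR
  simp only [G, betaMap, pf4, delRC, Matrix.submatrix_apply, Matrix.add_apply, Fin.sum_univ_five,
      show ((0:Fin 5).succAbove 0) = 1 from rfl,
      show ((0:Fin 5).succAbove 1) = 2 from rfl,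
      show ((0:Fin 5).succAbove 2) = 3 from rfl,
      show ((0:Fin 5).succAbove 3) = 4 from rfl,
      show ((1:Fin 5).succAbove 0) = 0 from rfl,
      show ((1:Fin 5).succAbove 1) = 2 from rfl,
      show ((1:Fin 5).succAbove 2) = 3 from rfl,
      show ((1:Fin 5).succAbove 3) = 4 from rfl,
      show ((2:Fin 5).succAbove 0) = 0 from rfl,
      show ((2:Fin 5).succAbove 1) = 1 from rfl,
      show ((2:Fin 5).succAbove 2) = 3 from rfl,
      show ((2:Fin 5).succAbove 3) = 4 from rfl,
      show ((3:Fin 5).succAbove 0) = 0 from rfl,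
      show ((3:Fin 5).succAbove 1) = 1 from rfl,
      show ((3:Fin 5).succAbove 2) = 2 from rfl,
      show ((3:Fin 5).succAbove 3) = 4 from rfl,
      show ((4:Fin 5).succAbove 0) = 0 from rfl,
      show ((4:Fin 5).succAbove 1) = 1 from rfl,
      show ((4:Fin 5).succAbove 2) = 2 from rfl,
      show ((4:Fin 5).succAbove 3) = 3 from rfl,
      show (((0:Fin 5)):ℕ) = 0 from rfl,
      show (((1:Fin 5)):ℕ) = 1 from rfl,
      show (((2:Fin 5)):ℕ) = 2 from rfl,
      show (((3:Fin 5)):ℕ) = 3 from rfl,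
      show (((4:Fin 5)):ℕ) = 4 from rfl,
      hRe 0 1, hRe 0 2, hRe 0 3, hRe 0 4, hRe 1 2, hRe 1 3, hRe 1 4, hRe 2 3, hRe 2 4, hRe 3 4, hRd 0, hRd 1, hRd 2, hRd 3, hRd 4]
  ring

lemma skew_swap (R : Matrix (Fin 5) (Fin 5) ℂ) (hR : Rᵀ = -R) (u v : Fin 5 → ℂ) :
    G u R v = -G v R u := by
  obtain ⟨hRe, hRd⟩ := skew_entries R hR
  simp only [G, betaMap, pf4, delRC, Matrix.submatrix_apply, Matrix.add_apply, Fin.sum_univ_five,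
      show ((0:Fin 5).succAbove 0) = 1 from rfl,
      show ((0:Fin 5).succAbove 1) = 2 from rfl,
      show ((0:Fin 5).succAbove 2) = 3 from rfl,
      show ((0:Fin 5).succAbove 3) = 4 from rfl,
      show ((1:Fin 5).succAbove 0) = 0 from rfl,
      show ((1:Fin 5).succAbove 1) = 2 from rfl,
      show ((1:Fin 5).succAbove 2) = 3 from rfl,
      show ((1:Fin 5).succAbove 3) = 4 from rfl,
      show ((2:Fin 5).succAbove 0) = 0 from rfl,
      show ((2:Fin 5).succAbove 1) = 1 from rfl,
      show ((2:Fin 5).succAbove 2) = 3 from rfl,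
      show ((2:Fin 5).succAbove 3) = 4 from rfl,
      show ((3:Fin 5).succAbove 0) = 0 from rfl,
      show ((3:Fin 5).succAbove 1) = 1 from rfl,
      show ((3:Fin 5).succAbove 2) = 2 from rfl,
      show ((3:Fin 5).succAbove 3) = 4 from rfl,
      show ((4:Fin 5).succAbove 0) = 0 from rfl,
      show ((4:Fin 5).succAbove 1) = 1 from rfl,
      show ((4:Fin 5).succAbove 2) = 2 from rfl,
      show ((4:Fin 5).succAbove 3) = 3 from rfl,
      show (((0:Fin 5)):ℕ) = 0 from rfl,
      show (((1:Fin 5)):ℕ) = 1 from rfl,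
      show (((2:Fin 5)):ℕ) = 2 from rfl,
      show (((3:Fin 5)):ℕ) = 3 from rfl,
      show (((4:Fin 5)):ℕ) = 4 from rfl,
      hRe 0 1, hRe 0 2, hRe 0 3, hRe 0 4, hRe 1 2, hRe 1 3, hRe 1 4, hRe 2 3, hRe 2 4, hRe 3 4, hRd 0, hRd 1, hRd 2, hRd 3, hRd 4]
  ring

lemma ker_left (A : Matrix (Fin 5) (Fin 5) ℂ) (hA : Aᵀ = -A) (v : Fin 5 → ℂ) :
    G (betaMap A A) A v = 0 := by
  obtain ⟨hAe, hAd⟩ := skew_entries A hA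
  simp only [G, betaMap, pf4, delRC, Matrix.submatrix_apply, Matrix.add_apply, Fin.sum_univ_five,
      show ((0:Fin 5).succAbove 0) = 1 from rfl,
      show ((0:Fin 5).succAbove 1) = 2 from rfl,
      show ((0:Fin 5).succAbove 2) = 3 from rfl,
      show ((0:Fin 5).succAbove 3) = 4 from rfl,
      show ((1:Fin 5).succAbove 0) = 0 from rfl,
      show ((1:Fin 5).succAbove 1) = 2 from rfl,
      show ((1:Fin 5).succAbove 2) = 3 from rfl,
      show ((1:Fin 5).succAbove 3) = 4 from rfl,
      show ((2:Fin 5).succAbove 0) = 0 from rfl,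
      show ((2:Fin 5).succAbove 1) = 1 from rfl,
      show ((2:Fin 5).succAbove 2) = 3 from rfl,
      show ((2:Fin 5).succAbove 3) = 4 from rfl,
      show ((3:Fin 5).succAbove 0) = 0 from rfl,
      show ((3:Fin 5).succAbove 1) = 1 from rfl,
      show ((3:Fin 5).succAbove 2) = 2 from rfl,
      show ((3:Fin 5).succAbove 3) = 4 from rfl,
      show ((4:Fin 5).succAbove 0) = 0 from rfl,
      show ((4:Fin 5).succAbove 1) = 1 from rfl,
      show ((4:Fin 5).succAbove 2) = 2 from rfl,
      show ((4:Fin 5).succAbove 3) = 3 from rfl,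
      show (((0:Fin 5)):ℕ) = 0 from rfl,
      show (((1:Fin 5)):ℕ) = 1 from rfl,
      show (((2:Fin 5)):ℕ) = 2 from rfl,
      show (((3:Fin 5)):ℕ) = 3 from rfl,
      show (((4:Fin 5)):ℕ) = 4 from rfl,
      hAe 0 1, hAe 0 2, hAe 0 3, hAe 0 4, hAe 1 2, hAe 1 3, hAe 1 4, hAe 2 3, hAe 2 4, hAe 3 4, hAd 0, hAd 1, hAd 2, hAd 3, hAd 4]
  ring

lemma ker_right (A : Matrix (Fin 5) (Fin 5) ℂ) (hA : Aᵀ = -A) (u : Fin 5 → ℂ) :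
    G u A (betaMap A A) = 0 := by
  rw [skew_swap A hA, ker_left A hA, neg_zero]

lemma hard (A B : Matrix (Fin 5) (Fin 5) ℂ) (hA : Aᵀ = -A) (hB : Bᵀ = -B) :
    G (betaMap A A) B (betaMap A B) = 0 := by
  obtain ⟨hAe, hAd⟩ := skew_entries A hA
  obtain ⟨hBe, hBd⟩ := skew_entries B hB
  simp only [G, betaMap, pf4, delRC, Matrix.submatrix_apply, Matrix.add_apply, Fin.sum_univ_five,
      show ((0:Fin 5).succAbove 0) = 1 from rfl,
      show ((0:Fin 5).succAbove 1) = 2 from rfl,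
      show ((0:Fin 5).succAbove 2) = 3 from rfl,
      show ((0:Fin 5).succAbove 3) = 4 from rfl,
      show ((1:Fin 5).succAbove 0) = 0 from rfl,
      show ((1:Fin 5).succAbove 1) = 2 from rfl,
      show ((1:Fin 5).succAbove 2) = 3 from rfl,
      show ((1:Fin 5).succAbove 3) = 4 from rfl,
      show ((2:Fin 5).succAbove 0) = 0 from rfl,
      show ((2:Fin 5).succAbove 1) = 1 from rfl,
      show ((2:Fin 5).succAbove 2) = 3 from rfl,
      show ((2:Fin 5).succAbove 3) = 4 from rfl,
      show ((3:Fin 5).succAbove 0) = 0 from rfl,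
      show ((3:Fin 5).succAbove 1) = 1 from rfl,
      show ((3:Fin 5).succAbove 2) = 2 from rfl,
      show ((3:Fin 5).succAbove 3) = 4 from rfl,
      show ((4:Fin 5).succAbove 0) = 0 from rfl,
      show ((4:Fin 5).succAbove 1) = 1 from rfl,
      show ((4:Fin 5).succAbove 2) = 2 from rfl,
      show ((4:Fin 5).succAbove 3) = 3 from rfl,
      show (((0:Fin 5)):ℕ) = 0 from rfl,
      show (((1:Fin 5)):ℕ) = 1 from rfl,
      show (((2:Fin 5)):ℕ) = 2 from rfl,
      show (((3:Fin 5)):ℕ) = 3 from rfl,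
      show (((4:Fin 5)):ℕ) = 4 from rfl,
      hAe 0 1, hAe 0 2, hAe 0 3, hAe 0 4, hAe 1 2, hAe 1 3, hAe 1 4, hAe 2 3, hAe 2 4, hAe 3 4, hAd 0, hAd 1, hAd 2, hAd 3, hAd 4, hBe 0 1, hBe 0 2, hBe 0 3, hBe 0 4, hBe 1 2, hBe 1 3, hBe 1 4, hBe 2 3, hBe 2 4, hBe 3 4, hBd 0, hBd 1, hBd 2, hBd 3, hBd 4]
  ring

lemma bracket_eq_G (i j k l m : Fin 4) (X : Fin 4 → Matrix (Fin 5) (Fin 5) ℂ) :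
    bracket i j k l m X = G (betaMap (X i) (X j)) (X k) (betaMap (X l) (X m)) := rfl

attribute [irreducible] pf4 delRC betaMap G

set_option maxHeartbeats 1000000 in
lemma G_eq_zero (A B : Matrix (Fin 5) (Fin 5) ℂ) (hA : Aᵀ = -A) (hB : Bᵀ = -B)
    (P Q R S T : Matrix (Fin 5) (Fin 5) ℂ)
    (hP : P = A ∨ P = B) (hQ : Q = A ∨ Q = B) (hR : R = A ∨ R = B)
    (hS : S = A ∨ S = B) (hT : T = A ∨ T = B) :
    G (betaMap P Q) R (betaMap S T) = 0 := by
  have hardBA := hard B A hB hA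
  rw [betaMap_comm B A] at hardBA
  have hard2 : G (betaMap A B) B (betaMap A A) = 0 := by
    rw [skew_swap B hB, hard A B hA hB, neg_zero]
  have hard2' : G (betaMap A B) A (betaMap B B) = 0 := by
    rw [skew_swap A hA, hardBA, neg_zero]
  rcases hP with h | h <;> rw [h] <;> clear h <;>
    rcases hQ with h | h <;> rw [h] <;> clear h <;>
    rcases hR with h | h <;> rw [h] <;> clear h <;>
    rcases hS with h | h <;> rw [h] <;> clear h <;>
    rcases hT with h | h <;> rw [h] <;> clear h <;>
    (try rw [betaMap_comm B A]) <;>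
    first
      | exact quad_zero _ ‹_› _
      | exact ker_left _ ‹_› _
      | exact ker_right _ ‹_› _
      | exact hard A B hA hB
      | exact hardBA
      | exact hard2
      | exact hard2'
      | (rw [skew_swap _ ‹_›]; first
          | rw [hard A B hA hB, neg_zero]
          | rw [hardBA, neg_zero]
          | rw [quad_zero _ ‹_›, neg_zero]
          | rw [ker_left _ ‹_›, neg_zero]
          | rw [ker_right _ ‹_›, neg_zero])

theorem bracket_eq_zero_of_card_le_two (i j k l m : Fin 4)
    (hcard : ({i, j, k, l, m} : Finset (Fin 4)).card ≤ 2)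
    (X : Fin 4 → Matrix (Fin 5) (Fin 5) ℂ) (hX : ∀ t, (X t)ᵀ = -X t) :
    bracket i j k l m X = 0 := by
  obtain ⟨t, hst, ht⟩ := Finset.exists_superset_card_eq hcard (by simp)
  obtain ⟨p, q, -, rfl⟩ := Finset.card_eq_two.mp ht
  have hmem : ∀ r : Fin 4, r ∈ ({i, j, k, l, m} : Finset (Fin 4)) → X r = X p ∨ X r = X q := by
    intro r hr
    rcases Finset.mem_insert.mp (hst hr) with h | h
    · exact Or.inl (by rw [h])
    · exact Or.inr (by rw [Finset.mem_singleton.mp h])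
  rw [bracket_eq_G]
  exact G_eq_zero (X p) (X q) (hX p) (hX q) _ _ _ _ _
    (hmem i (by simp)) (hmem j (by simp)) (hmem k (by simp))
    (hmem l (by simp)) (hmem m (by simp))
end
end

section
/- Let r ≥ 2, l ≥ 2 and let π : ℤ^r → ℤ^l be a surjective group homomorphism. Then every 1-cocycle α : ℤ^r → ℤ[x_1^{±1},…,x_l^{±1}] for the translation action through π is a coboundary: there exists a ∈ ℤ[x_1^{±1},…,x_l^{±1}] such that α(m) = x^{π(m)}·a − a for all m ∈ ℤ^r. (Equivalently, the first group cohomology of ℤ^r with coefficients in ℤ[ℤ^l], acting by translation through π, vanishes.) -/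
/-!
Comparing `α (m + m')` with `α (m' + m)` gives `(x^{π m} - 1) α m' = (x^{π m'} - 1) α m`.
Choose `m₀, m₁` with `π m₀ = e₀` and `π m₁ = e₁`, two distinct basis vectors. Reducing
`(x^{e₁} - 1) α m₀ = (x^{e₀} - 1) α m₁` modulo `x^{e₀} - 1`, i.e. applying the ring map
induced by the projection killing the `e₀`-coordinate, and using that `ℤ[ℤ^l]` is a domain,
shows that `x^{e₀} - 1` divides `α m₀`, say `α m₀ = (x^{e₀} - 1) a`. Cancelling `x^{e₀} - 1`
in `(x^{e₀} - 1) α m = (x^{π m} - 1) α m₀` then gives `α m = x^{π m} a - a`.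
-/

noncomputable section

/-- The monomial `x^u` in the Laurent polynomial ring `ℤ[x₁^{±1},…,x_l^{±1}] = ℤ[ℤ^l]`. -/
def xpow {l : ℕ} (u : Fin l → ℤ) : AddMonoidAlgebra ℤ (Fin l → ℤ) :=
  AddMonoidAlgebra.single u 1

/-- A 1-cocycle for the translation action of `ℤ^r` on `ℤ[ℤ^l]` through `π`. -/
def IsCocycle {r l : ℕ} (π : (Fin r → ℤ) →+ (Fin l → ℤ))
    (α : (Fin r → ℤ) → AddMonoidAlgebra ℤ (Fin l → ℤ)) : Prop :=
  ∀ m m' : Fin r → ℤ, α (m + m') = xpow (π m) * α m' + α m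

open AddMonoidAlgebra

theorem Units.val_sub_one_dvd_val_zpow_sub_one {R : Type*} [CommRing R] (u : Rˣ) (n : ℤ) :
    (u : R) - 1 ∣ ((u ^ n : Rˣ) : R) - 1 := by
  obtain ⟨n, rfl | rfl⟩ := n.eq_nat_or_neg
  · simpa using sub_one_dvd_pow_sub_one (u : R) n
  · have h : ((u ^ (-(n : ℤ)) : Rˣ) : R) - 1 =
        -((u ^ (-(n : ℤ)) : Rˣ) : R) * ((u : R) ^ n - 1) := by
      rw [neg_mul, mul_sub, ← Units.val_pow_eq_pow_val, ← Units.val_mul, ← zpow_natCast,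
        ← zpow_add, neg_add_cancel, zpow_zero, Units.val_one]
      ring
    rw [h]
    exact (sub_one_dvd_pow_sub_one (u : R) n).mul_left _

namespace AddMonoidAlgebra

variable {k G : Type*} [CommRing k] [AddCommGroup G]

theorem single_sub_one_dvd_single_zsmul_sub_one (u : G) (n : ℤ) :
    single u (1 : k) - 1 ∣ single (n • u) 1 - 1 := by
  simpa [← map_zpow] using
    Units.val_sub_one_dvd_val_zpow_sub_one ((of k G).toHomUnits (.ofAdd u)) n

theorem single_sub_one_dvd_single_sub_single {e u v : G}
    (h : u - v ∈ AddSubgroup.zmultiples e) : single e (1 : k) - 1 ∣ single u 1 - single v 1 := by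
  obtain ⟨n, hn : n • e = u - v⟩ := h
  have : single u (1 : k) - single v 1 = single v 1 * (single (n • e) 1 - 1) := by
    rw [mul_sub, single_mul_single, hn, add_sub_cancel, mul_one, mul_one]
  rw [this]
  exact (single_sub_one_dvd_single_zsmul_sub_one e n).mul_left _

theorem single_sub_one_dvd_sub_mapDomainRingHom {e : G} {f : G →+ G}
    (hf : ∀ u, u - f u ∈ AddSubgroup.zmultiples e) (c : AddMonoidAlgebra k G) :
    single e (1 : k) - 1 ∣ c - mapDomainRingHom k f c := by
  induction c using AddMonoidAlgebra.induction_linear with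
  | zero => simp
  | add c d hc hd =>
    rw [map_add, add_sub_add_comm]
    exact dvd_add hc hd
  | single u b =>
    have : single u b - mapDomainRingHom k f (single u b) =
        single 0 b * (single u 1 - single (f u) 1) := by
      simp [mul_sub, single_mul_single]
    rw [this]
    exact (single_sub_one_dvd_single_sub_single (hf u)).mul_left _

theorem single_sub_one_ne_zero [Nontrivial k] {u : G} (hu : u ≠ 0) : single u (1 : k) - 1 ≠ 0 := by
  rw [sub_ne_zero, one_def]
  exact fun h ↦ hu (single_left_injective one_ne_zero h)

-- `mapDomainRingHom k f` sends `single e 1` to `1`: it computes residues modulo `single e 1 - 1`.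
theorem single_sub_one_dvd_of_sub_one_mul_eq [Nontrivial k]
    [NoZeroDivisors (AddMonoidAlgebra k G)]
    {e e' : G} {f : G →+ G} (hf : ∀ u, u - f u ∈ AddSubgroup.zmultiples e) (hfe : f e = 0)
    (hfe' : f e' ≠ 0) {c d : AddMonoidAlgebra k G}
    (h : (single e' (1 : k) - 1) * c = (single e 1 - 1) * d) : single e (1 : k) - 1 ∣ c := by
  have hc : mapDomainRingHom k f c = 0 := by
    have h' := congr_arg (mapDomainRingHom k f) h
    simp only [map_mul, map_sub, map_one, mapDomainRingHom_apply, mapDomain_single, hfe,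
      ← one_def, sub_self, zero_mul] at h'
    exact (mul_eq_zero.mp h').resolve_left (single_sub_one_ne_zero hfe')
  simpa [hc] using single_sub_one_dvd_sub_mapDomainRingHom hf c

end AddMonoidAlgebra

theorem Pi.exists_addMonoidHom_sub_mem_zmultiples_single {ι : Type*} [DecidableEq ι] {i j : ι}
    (hji : j ≠ i) : ∃ f : (ι → ℤ) →+ (ι → ℤ),
      (∀ u, u - f u ∈ AddSubgroup.zmultiples (Pi.single i 1)) ∧
        f (Pi.single i 1) = 0 ∧ f (Pi.single j 1) ≠ 0 := by
  refine ⟨.id _ - (AddMonoidHom.single _ i).comp (Pi.evalAddMonoidHom _ i),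
    fun u ↦ ⟨u i, ?_⟩, ?_, ?_⟩
  · simp [← Pi.single_smul]
  · simp
  · simp [hji]

namespace IsCocycle

variable {r l : ℕ} {π : (Fin r → ℤ) →+ (Fin l → ℤ)}
  {α : (Fin r → ℤ) → AddMonoidAlgebra ℤ (Fin l → ℤ)}

theorem sub_one_mul_comm (hα : IsCocycle π α) (m m' : Fin r → ℤ) :
    (xpow (π m) - 1) * α m' = (xpow (π m') - 1) * α m := by
  have h := hα m' m
  rw [add_comm] at h
  linear_combination h - hα m m'

theorem exists_coboundary_of_dvd (hα : IsCocycle π α) {m₀ : Fin r → ℤ} (h₀ : π m₀ ≠ 0)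
    (hdvd : xpow (π m₀) - 1 ∣ α m₀) : ∃ a, ∀ m, α m = xpow (π m) * a - a := by
  obtain ⟨a, ha⟩ := hdvd
  have hne : xpow (π m₀) - 1 ≠ 0 := single_sub_one_ne_zero h₀
  refine ⟨a, fun m ↦ mul_left_cancel₀ hne ?_⟩
  linear_combination hα.sub_one_mul_comm m₀ m + (xpow (π m) - 1) * ha

end IsCocycle

theorem cocycle_is_coboundary_general {r l : ℕ} (hl : 2 ≤ l)
    (π : (Fin r → ℤ) →+ (Fin l → ℤ)) (hπ : Function.Surjective π)
    (α : (Fin r → ℤ) → AddMonoidAlgebra ℤ (Fin l → ℤ)) (hα : IsCocycle π α) :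
    ∃ a : AddMonoidAlgebra ℤ (Fin l → ℤ), ∀ m : Fin r → ℤ, α m = xpow (π m) * a - a := by
  let i₀ : Fin l := ⟨0, by omega⟩
  let i₁ : Fin l := ⟨1, by omega⟩
  obtain ⟨f, hf, hfi₀, hfi₁⟩ :=
    Pi.exists_addMonoidHom_sub_mem_zmultiples_single (i := i₀) (j := i₁) (by simp [i₀, i₁])
  obtain ⟨m₀, hm₀⟩ := hπ (Pi.single i₀ 1)
  obtain ⟨m₁, hm₁⟩ := hπ (Pi.single i₁ 1)
  have hrel := hα.sub_one_mul_comm m₁ m₀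
  rw [hm₀, hm₁] at hrel
  refine hα.exists_coboundary_of_dvd (m₀ := m₀) ?_ ?_ <;> rw [hm₀]
  · exact Pi.single_ne_zero_iff.mpr one_ne_zero
  · exact single_sub_one_dvd_of_sub_one_mul_eq hf hfi₀ hfi₁ hrel

theorem cocycle_is_coboundary {r l : ℕ} (hr : 2 ≤ r) (hl : 2 ≤ l)
    (π : (Fin r → ℤ) →+ (Fin l → ℤ)) (hπ : Function.Surjective π)
    (α : (Fin r → ℤ) → AddMonoidAlgebra ℤ (Fin l → ℤ)) (hα : IsCocycle π α) :
    ∃ a : AddMonoidAlgebra ℤ (Fin l → ℤ), ∀ m : Fin r → ℤ, α m = xpow (π m) * a - a :=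
  cocycle_is_coboundary_general hl π hπ α hα
end
end

section
/- Let f ∈ k[X_1,…,X_r] be an irreducible polynomial such that the quotient group ℤ^r/Ξ_f is infinite cyclic. Then there exist integers n_1,…,n_r, not all zero, such that the greatest common divisor of the nonzero n_i equals 1 (equivalently, there is m ∈ ℤ^r with n_1 m_1 + ⋯ + n_r m_r = 1), and an irreducible univariate polynomial h ∈ k[t], such that f(X_1,…,X_r) = h(n_1 X_1 + ⋯ + n_r X_r). -/
/-!
Composing `ℤ^r ⧸ Ξ_f ≃+ ℤ` with the projection gives a linear form `n` with kernel `Ξ_f` and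
some `m₀` with `n · m₀ = 1`. Invariance of `f` under an integer translation `w` extends to
invariance under `c • w` for every `c ∈ k`, since `t ↦ f(y + t • w)` is a polynomial in `t` that is
constant on `ℕ`. Every `x ∈ k^r` differs from `(n · x) • m₀` by `∑ xᵢ • (eᵢ - nᵢ • m₀)`, a
`k`-combination of elements of `Ξ_f`, so `f = h(n · X)` with `h(t) = f(t • m₀)`. The substitution
`X ↦ t • m₀` is a left inverse of `h ↦ h(n · X)`, so irreducibility of `f` passes to `h`.
-/

open MvPolynomial

noncomputable section

/-- Translation of a polynomial: `(τ_m f)(X) = f(X₁ + m₁, …, X_r + m_r)`. -/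
def polyTranslate (k : Type*) [CommRing k] {r : ℕ} (m : Fin r → ℤ) :
    MvPolynomial (Fin r) k →ₐ[k] MvPolynomial (Fin r) k :=
  aeval fun i => X i + C ((m i : ℤ) : k)

lemma polyTranslate_comp (k : Type*) [CommRing k] {r : ℕ} (m m' : Fin r → ℤ)
    (f : MvPolynomial (Fin r) k) :
    polyTranslate k m (polyTranslate k m' f) = polyTranslate k (m + m') f := by
  rw [← AlgHom.comp_apply]
  congr 1
  apply algHom_ext
  intro i
  simp only [polyTranslate, AlgHom.comp_apply, aeval_X, map_add, aeval_C, algebraMap_eq,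
    Pi.add_apply, Int.cast_add]
  ring

lemma polyTranslate_zero (k : Type*) [CommRing k] {r : ℕ}
    (f : MvPolynomial (Fin r) k) : polyTranslate k (0 : Fin r → ℤ) f = f := by
  have : polyTranslate k (0 : Fin r → ℤ) = AlgHom.id k _ := by
    apply algHom_ext
    intro i
    simp [polyTranslate]
  rw [this, AlgHom.id_apply]

/-- The stabilizer `Ξ_f = { m ∈ ℤ^r : τ_m f = f }` of `f` under translations. -/
def stabXi (k : Type*) [CommRing k] {r : ℕ} (f : MvPolynomial (Fin r) k) :
    AddSubgroup (Fin r → ℤ) where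
  carrier := {m | polyTranslate k m f = f}
  zero_mem' := polyTranslate_zero k f
  add_mem' := by
    intro a b ha hb
    show polyTranslate k (a + b) f = f
    rw [← polyTranslate_comp, hb, ha]
  neg_mem' := by
    intro a ha
    show polyTranslate k (-a) f = f
    conv_lhs => rw [← ha]
    rw [polyTranslate_comp, neg_add_cancel, polyTranslate_zero]

theorem AddSubgroup.exists_unimodular_form_of_quotient_addEquiv_int {ι : Type*} [Fintype ι]
    {H : AddSubgroup (ι → ℤ)} (e : ((ι → ℤ) ⧸ H) ≃+ ℤ) :
    ∃ n : ι → ℤ, (∃ m : ι → ℤ, ∑ i, n i * m i = 1) ∧ ∀ m, m ∈ H ↔ ∑ i, n i * m i = 0 := by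
  classical
  set π : (ι → ℤ) →+ ℤ := e.toAddMonoidHom.comp (QuotientAddGroup.mk' H)
  have hπ : ∀ m, π m = ∑ i, π (fun j => if i = j then 1 else 0) * m i := fun m => by
    simpa [mul_comm] using LinearMap.pi_apply_eq_sum_univ π.toIntLinearMap m
  refine ⟨fun i => π (fun j => if i = j then 1 else 0), ?_, fun m => ?_⟩
  · obtain ⟨m, hm⟩ := (e.surjective.comp (QuotientAddGroup.mk'_surjective H)) 1
    exact ⟨m, (hπ m).symm.trans hm⟩
  · rw [← hπ, ← QuotientAddGroup.eq_zero_iff]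
    simp [π]

theorem Polynomial.irreducible_of_irreducible_aeval {R A : Type*} [CommSemiring R]
    [CommSemiring A] [Algebra R A] {a : A} (ψ : A →ₐ[R] Polynomial R) (hψ : ψ a = Polynomial.X)
    {p : Polynomial R} (hp : Irreducible (Polynomial.aeval a p)) : Irreducible p :=
  have : IsLocalHom (Polynomial.aeval (R := R) a) := isLocalHom_of_leftInverse ψ fun q => by
    rw [← Polynomial.aeval_algHom_apply, hψ, Polynomial.aeval_X_left_apply]
  hp.of_map

theorem eval_polyTranslate {k : Type*} [CommRing k] {r : ℕ} (m : Fin r → ℤ)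
    (f : MvPolynomial (Fin r) k) (y : Fin r → k) :
    eval y (polyTranslate k m f) = eval (y + fun i => (m i : k)) f := by
  change aeval y (aeval _ f) = _
  rw [comp_aeval_apply]
  simp only [map_add, aeval_X, aeval_C, Algebra.algebraMap_self, RingHom.id_apply]
  rfl

namespace MvPolynomial

variable {σ k : Type*} [CommRing k] [IsDomain k] [CharZero k]

theorem eval_add_smul_eq_of_forall_eval_add_eq {f : MvPolynomial σ k} {v : σ → k}
    (hv : ∀ y, eval (y + v) f = eval y f) (c : k) (y : σ → k) :
    eval (y + c • v) f = eval y f := by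
  set p : Polynomial k :=
    aeval (fun i => Polynomial.C (y i) + Polynomial.X * Polynomial.C (v i)) f
  have hp : ∀ t : k, p.eval t = eval (y + t • v) f := fun t => by
    rw [← Polynomial.coe_aeval_eq_eval, comp_aeval_apply]
    simp only [map_add, map_mul, Polynomial.aeval_C, Polynomial.aeval_X]
    rfl
  have hnat : ∀ n : ℕ, eval (y + (n : k) • v) f = eval y f := by
    intro n
    induction n with
    | zero => simp
    | succ n ih => rw [Nat.cast_succ, add_smul, one_smul, ← add_assoc, hv, ih]
  have hconst : p = Polynomial.C (eval y f) := Polynomial.eq_of_infinite_eval_eq _ _ <|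
    (Set.infinite_range_of_injective Nat.cast_injective).mono <| by
      rintro _ ⟨n, rfl⟩
      simp [hp, hnat]
  rw [← hp, hconst, Polynomial.eval_C]

def periods (f : MvPolynomial σ k) : Submodule k (σ → k) where
  carrier := {v | ∀ y, eval (y + v) f = eval y f}
  add_mem' hv hw y := by rw [← add_assoc, hw, hv]
  zero_mem' y := by rw [add_zero]
  smul_mem' c _ hv y := eval_add_smul_eq_of_forall_eval_add_eq hv c y

variable {r : ℕ}

theorem intCast_mem_periods_of_mem_stabXi {f : MvPolynomial (Fin r) k} {m : Fin r → ℤ}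
    (hm : m ∈ stabXi k f) : (fun i => (m i : k)) ∈ periods f := fun y => by
  rw [← eval_polyTranslate, hm.out]

theorem aeval_mul_linearForm_eq_self {f : MvPolynomial (Fin r) k} {n m₀ : Fin r → ℤ}
    (hnm : ∑ i, n i * m₀ i = 1) (hker : ∀ m, ∑ i, n i * m i = 0 → m ∈ stabXi k f) :
    aeval (fun i => C (m₀ i : k) * ∑ j, C (n j : k) * X j) f = f := by
  have : Infinite k := CharZero.infinite k
  refine funext fun x => ?_
  set w : Fin r → Fin r → ℤ := fun i => Pi.single i 1 - n i • m₀
  have hw : ∀ i, w i ∈ stabXi k f := fun i => hker _ <| by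
    simp [w, Finset.sum_sub_distrib, Pi.single_apply, mul_sub, mul_left_comm _ (n i),
      ← Finset.mul_sum, hnm]
  have hx :
      x = (fun i => (m₀ i : k) * ∑ j, (n j : k) * x j) + ∑ i, x i • fun j => (w i j : k) := by
    funext j
    simp [w, Pi.single_apply, mul_sub, Finset.sum_sub_distrib, Finset.mul_sum, mul_comm,
      mul_assoc]
  have hper : ∑ i, x i • (fun j => (w i j : k)) ∈ periods f :=
    Submodule.sum_mem _ fun i _ =>
      Submodule.smul_mem _ _ (intCast_mem_periods_of_mem_stabXi (hw i))
  conv_rhs => rw [hx, hper]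
  change aeval x (aeval _ f) = _
  rw [comp_aeval_apply]
  simp only [map_mul, map_sum, aeval_C, aeval_X, Algebra.algebraMap_self, RingHom.id_apply]
  rfl

end MvPolynomial

theorem irreducible_of_rank_one_stabilizer (k : Type*) [Field k] [CharZero k] {r : ℕ}
    (f : MvPolynomial (Fin r) k) (hf : Irreducible f)
    (hcyc : Nonempty (((Fin r → ℤ) ⧸ stabXi k f) ≃+ ℤ)) :
    ∃ (n : Fin r → ℤ) (h : Polynomial k),
      n ≠ 0 ∧ (∃ m : Fin r → ℤ, ∑ i, n i * m i = 1) ∧ Irreducible h ∧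
      f = Polynomial.aeval (∑ i, C ((n i : ℤ) : k) * X i) h := by
  obtain ⟨e⟩ := hcyc
  obtain ⟨n, ⟨m₀, hnm⟩, hker⟩ := AddSubgroup.exists_unimodular_form_of_quotient_addEquiv_int e
  set L : MvPolynomial (Fin r) k := ∑ i, C ((n i : ℤ) : k) * X i
  set ψ : MvPolynomial (Fin r) k →ₐ[k] Polynomial k :=
    aeval fun i => Polynomial.C (m₀ i : k) * Polynomial.X
  have hfL : f = Polynomial.aeval L (ψ f) := by
    rw [comp_aeval_apply]
    simp only [map_mul, Polynomial.aeval_C, Polynomial.aeval_X, algebraMap_eq]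
    exact (aeval_mul_linearForm_eq_self hnm fun m => (hker m).2).symm
  have hψL : ψ L = Polynomial.X := by
    simp only [L, ψ, map_sum, map_mul, map_intCast, aeval_X, ← mul_assoc, ← Finset.sum_mul]
    rw [show ∑ i, (n i : Polynomial k) * m₀ i = 1 by exact_mod_cast hnm, one_mul]
  refine ⟨n, ψ f, ?_, ⟨m₀, hnm⟩,
    Polynomial.irreducible_of_irreducible_aeval ψ hψL (hfL ▸ hf), hfL⟩
  rintro rfl
  simp at hnm
end
end

section
/- Let μ : ℤ^r → ℤ be a surjective group homomorphism and let ℤ^r act on ℤ[λ, λ^{−1}] by m · a = λ^{μ(m)} a. Then the abelian group of 1-cocycles α : ℤ^r → ℤ[λ, λ^{−1}] modulo the subgroup of coboundaries (maps of the form m ↦ λ^{μ(m)} a − a for some fixed a ∈ ℤ[λ,λ^{−1}]) is infinite cyclic; explicitly, fixing m_0 ∈ ℤ^r with μ(m_0) = 1, the map sending a cocycle α to the sum of the coefficients of the Laurent polynomial α(m_0) induces a group isomorphism from the quotient (cocycles modulo coboundaries) onto ℤ. -/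
noncomputable section

/-- The Laurent polynomial ring `ℤ[λ, λ⁻¹]`, i.e. the group ring `ℤ[ℤ]`. -/
abbrev LaurentZ : Type := AddMonoidAlgebra ℤ ℤ

/-- The monomial `λ^u` in `ℤ[λ, λ⁻¹]`. -/
def lam (u : ℤ) : LaurentZ := AddMonoidAlgebra.single u 1

/-- The group of 1-cocycles for the action `m • a = λ^{μ(m)} a` of `ℤ^r` on `ℤ[λ, λ⁻¹]`. -/
def cocycles {r : ℕ} (μ : (Fin r → ℤ) →+ ℤ) :
    AddSubgroup ((Fin r → ℤ) → LaurentZ) where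
  carrier := {α | ∀ m m' : Fin r → ℤ, α (m + m') = lam (μ m) * α m' + α m}
  zero_mem' := by intro m m'; simp
  add_mem' := by
    intro a b ha hb m m'
    simp only [Pi.add_apply, ha m m', hb m m']
    ring
  neg_mem' := by
    intro a ha m m'
    simp only [Pi.neg_apply, ha m m']
    ring

/-- The group of 1-coboundaries `m ↦ λ^{μ(m)} a − a`. -/
def coboundaries {r : ℕ} (μ : (Fin r → ℤ) →+ ℤ) :
    AddSubgroup ((Fin r → ℤ) → LaurentZ) where
  carrier := {α | ∃ a : LaurentZ, ∀ m : Fin r → ℤ, α m = lam (μ m) * a - a}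
  zero_mem' := ⟨0, by intro m; simp⟩
  add_mem' := by
    rintro α β ⟨a, ha⟩ ⟨b, hb⟩
    refine ⟨a + b, fun m => ?_⟩
    simp only [Pi.add_apply, ha m, hb m]
    ring
  neg_mem' := by
    rintro α ⟨a, ha⟩
    refine ⟨-a, fun m => ?_⟩
    simp only [Pi.neg_apply, ha m]
    ring

/-- The sum-of-coefficients ring map `ℤ[λ,λ⁻¹] → ℤ` (evaluation at `λ = 1`). -/
def sumCoeffs (p : LaurentZ) : ℤ := p.coeff.sum fun _ c => c

/-!
Comparing the cocycle identity for `m + m₀` and `m₀ + m` gives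
`(λ - 1) α(m) = (λ^{μ m} - 1) α(m₀)`, and `λ - 1` is not a zero divisor, so a cocycle is
determined by `α(m₀)`. It is a coboundary exactly when `α(m₀)` is divisible by `λ - 1`,
i.e. when its coefficients sum to `0`. The cocycle `m ↦ [μ m]_λ` of quantum integers takes a
value with coefficient sum `1` at `m₀`, so the coefficient sum at `m₀` maps the cocycles onto `ℤ`.
-/

open AddMonoidAlgebra

def sumCoeffsHom : LaurentZ →+* ℤ := (lift ℤ ℤ ℤ 1).toRingHom

lemma sumCoeffsHom_apply (p : LaurentZ) : sumCoeffsHom p = sumCoeffs p := by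
  change lift ℤ ℤ ℤ 1 p = _
  simp [lift_apply, sumCoeffs]

lemma lam_add (u v : ℤ) : lam (u + v) = lam u * lam v := by
  rw [lam, lam, lam, single_mul_single, one_mul]

lemma lam_zero : lam 0 = 1 := rfl

@[simp] lemma sumCoeffsHom_lam (u : ℤ) : sumCoeffsHom (lam u) = 1 := by
  change lift ℤ ℤ ℤ 1 (single u 1) = 1
  rw [lift_single]
  simp

lemma lam_one_sub_one_ne_zero : lam 1 - 1 ≠ 0 := by
  rw [sub_ne_zero, lam, one_def]
  exact fun h => by simpa using single_inj.mp h

lemma lam_one_sub_one_dvd_lam_sub_one (k : ℤ) : lam 1 - 1 ∣ lam k - 1 := by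
  induction k using Int.induction_on with
  | zero => simp [lam_zero]
  | succ k ih =>
    have : lam (k + 1) - 1 = lam 1 * (lam k - 1) + (lam 1 - 1) := by rw [lam_add]; ring
    exact this ▸ (dvd_mul_of_dvd_right ih _).add dvd_rfl
  | pred k ih =>
    have : lam (-k - 1) - 1 = lam (-1) * (lam (-k) - 1) - lam (-1) * (lam 1 - 1) := by
      have h : lam (-1) * lam 1 = 1 := by rw [← lam_add]; rfl
      rw [sub_eq_add_neg (-(k : ℤ)), lam_add]
      linear_combination h
    exact this ▸ (dvd_mul_of_dvd_right ih _).sub (dvd_mul_left _ _)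

lemma lam_one_sub_one_dvd_sub_sumCoeffsHom (p : LaurentZ) :
    lam 1 - 1 ∣ p - (sumCoeffsHom p : LaurentZ) := by
  induction p using AddMonoidAlgebra.induction_linear with
  | zero => simp
  | add p q hp hq =>
    have : p + q - ((sumCoeffsHom (p + q) : ℤ) : LaurentZ) =
      (p - (sumCoeffsHom p : LaurentZ)) + (q - (sumCoeffsHom q : LaurentZ)) := by
      push_cast [map_add]; ring
    exact this ▸ hp.add hq
  | single k c =>
    have : single k c = c • lam k := by rw [lam, smul_single', mul_one]
    rw [this, map_zsmul, sumCoeffsHom_lam, smul_eq_mul, mul_one, zsmul_eq_mul, ← mul_sub_one]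
    exact dvd_mul_of_dvd_right (lam_one_sub_one_dvd_lam_sub_one k) _

lemma lam_one_sub_one_dvd_iff {p : LaurentZ} : lam 1 - 1 ∣ p ↔ sumCoeffsHom p = 0 := by
  refine ⟨fun ⟨q, hq⟩ => by simp [hq], fun hp => ?_⟩
  simpa [hp] using lam_one_sub_one_dvd_sub_sumCoeffsHom p

/-- The quantum integer `[k]_λ = (λ^k - 1) / (λ - 1)`. -/
def qInt (k : ℤ) : LaurentZ := (lam_one_sub_one_dvd_lam_sub_one k).choose

lemma lam_one_sub_one_mul_qInt (k : ℤ) : (lam 1 - 1) * qInt k = lam k - 1 :=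
  (lam_one_sub_one_dvd_lam_sub_one k).choose_spec.symm

lemma qInt_add (k k' : ℤ) : qInt (k + k') = lam k * qInt k' + qInt k := by
  refine mul_left_cancel₀ lam_one_sub_one_ne_zero ?_
  linear_combination lam_one_sub_one_mul_qInt (k + k') - lam k * lam_one_sub_one_mul_qInt k'
    - lam_one_sub_one_mul_qInt k + lam_add k k'

lemma qInt_one : qInt 1 = 1 :=
  mul_left_cancel₀ lam_one_sub_one_ne_zero ((lam_one_sub_one_mul_qInt 1).trans (mul_one _).symm)

section Cocycles

variable {r : ℕ} {μ : (Fin r → ℤ) →+ ℤ} {m₀ : Fin r → ℤ}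

lemma lam_sub_one_mul_apply_comm {α : (Fin r → ℤ) → LaurentZ} (hα : α ∈ cocycles μ)
    (m m' : Fin r → ℤ) : (lam (μ m) - 1) * α m' = (lam (μ m') - 1) * α m := by
  have h := hα m' m
  rw [add_comm m' m, hα m m'] at h
  linear_combination h

lemma mem_coboundaries_iff_sumCoeffsHom_eq_zero (hm₀ : μ m₀ = 1)
    {α : (Fin r → ℤ) → LaurentZ} (hα : α ∈ cocycles μ) :
    α ∈ coboundaries μ ↔ sumCoeffsHom (α m₀) = 0 := by
  refine ⟨fun ⟨a, ha⟩ => by simp [ha, hm₀], fun h => ?_⟩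
  obtain ⟨a, ha⟩ := lam_one_sub_one_dvd_iff.mpr h
  refine ⟨a, fun m => mul_left_cancel₀ lam_one_sub_one_ne_zero ?_⟩
  calc (lam 1 - 1) * α m = (lam (μ m) - 1) * α m₀ := by
        rw [← hm₀, lam_sub_one_mul_apply_comm hα]
    _ = (lam 1 - 1) * (lam (μ m) * a - a) := by rw [ha]; ring

variable (μ m₀)

def qIntCocycle : cocycles μ :=
  ⟨fun m => qInt (μ m), fun m m' => by simp only [map_add, qInt_add]⟩

def sumCoeffsAt : cocycles μ →+ ℤ :=
  sumCoeffsHom.toAddMonoidHom.comp <|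
    (Pi.evalAddMonoidHom (fun _ => LaurentZ) m₀).comp (cocycles μ).subtype

variable {μ m₀}

lemma sumCoeffsAt_surjective (hm₀ : μ m₀ = 1) : Function.Surjective (sumCoeffsAt μ m₀) :=
  fun n => ⟨n • qIntCocycle μ, by simp [sumCoeffsAt, qIntCocycle, hm₀, qInt_one]⟩

lemma ker_sumCoeffsAt (hm₀ : μ m₀ = 1) :
    (sumCoeffsAt μ m₀).ker = (coboundaries μ).addSubgroupOf (cocycles μ) := by
  ext α
  rw [AddSubgroup.mem_addSubgroupOf, mem_coboundaries_iff_sumCoeffsHom_eq_zero hm₀ α.2]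
  rfl

end Cocycles

theorem first_cohomology_infinite_cyclic_general {r : ℕ} (μ : (Fin r → ℤ) →+ ℤ)
    (m₀ : Fin r → ℤ) (hm₀ : μ m₀ = 1) :
    ∃ e : (cocycles μ ⧸ (coboundaries μ).addSubgroupOf (cocycles μ)) ≃+ ℤ,
      ∀ α : cocycles μ,
        e (QuotientAddGroup.mk α) = sumCoeffs ((α : (Fin r → ℤ) → LaurentZ) m₀) :=
  ⟨(QuotientAddGroup.quotientAddEquivOfEq (ker_sumCoeffsAt hm₀).symm).trans
      (QuotientAddGroup.quotientKerEquivOfSurjective _ (sumCoeffsAt_surjective hm₀)),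
    fun _ => sumCoeffsHom_apply _⟩

theorem first_cohomology_infinite_cyclic {r : ℕ} (μ : (Fin r → ℤ) →+ ℤ)
    (hμ : Function.Surjective μ) (m₀ : Fin r → ℤ) (hm₀ : μ m₀ = 1) :
    ∃ e : (cocycles μ ⧸ (coboundaries μ).addSubgroupOf (cocycles μ)) ≃+ ℤ,
      ∀ α : cocycles μ,
        e (QuotientAddGroup.mk α) = sumCoeffs ((α : (Fin r → ℤ) → LaurentZ) m₀) :=
  first_cohomology_infinite_cyclic_general μ m₀ hm₀
end
end

section
/- Let 𝔄 be an abelian category and F : 𝔄 → Ab an additive, faithful, exact functor to the category of abelian groups. For an object X of 𝔄 set E = End_𝔄(X); for any object Y, Hom_𝔄(X,Y) is a right E-module by precomposition and F(X) is a left E-module via F. Then X is a simple object of 𝔄 if and only if both: (a) E is a division ring; and (b) for every object Y of 𝔄, the evaluation map Hom_𝔄(X,Y) ⊗_E F(X) → F(Y), f ⊗ x ↦ F(f)(x), is injective. -/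
/-!
If `X` is simple, `End X` is a division ring by Schur's lemma. Suppose `∑ fᵢ ⊗ xᵢ` evaluates to
zero. If the `fᵢ` are linearly independent over `End X`, the induced map `⨁ X ⟶ Y` is a
monomorphism (by induction on the number of summands, since a nonzero subobject of `X` is all of
`X`), so exactness of `F` forces every `xᵢ = 0`; otherwise some `fⱼ` is an `End X`-combination of
the others, and the balancing relations shorten the sum.

Conversely, as `F` is faithful, `X` is simple once `F(q)` is injective for every nonzero
`q : X ⟶ Y`, for then every nonzero morphism out of `X` is a monomorphism. Since `Hom(X, Y)` is a
vector space over the division ring `End X`, there is an `End X`-linear `Λ : Hom(X, Y) → End X`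
with `Λ q ≠ 0`. If `F(q) x = 0`, then `q ⊗ x` lies in the span of the balancing relations, which
`Λ ⊗ id` carries to relations for `Hom(X, X)`; evaluating gives `F(Λ q) x = 0`, and `Λ q` is
invertible.
-/
open CategoryTheory
open CategoryTheory.Limits
open scoped TensorProduct

universe w v u

noncomputable section

variable {𝔄 : Type u} [Category.{v} 𝔄] [Abelian 𝔄]

/-- The evaluation map `Hom_𝔄(X,Y) ⊗_ℤ F(X) → F(Y)`, `f ⊗ x ↦ F(f)(x)`. -/
def evTensor (F : 𝔄 ⥤ AddCommGrpCat.{w}) [F.Additive] (X Y : 𝔄) :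
    ((X ⟶ Y) ⊗[ℤ] (F.obj X)) →ₗ[ℤ] F.obj Y :=
  TensorProduct.lift <| LinearMap.mk₂ ℤ (fun f x => F.map f x)
    (fun f g x => by
      show F.map (f + g) x = F.map f x + F.map g x
      rw [F.map_add]; first | rfl | simp)
    (fun n f x => by
      show F.map (n • f) x = n • F.map f x
      rw [F.map_zsmul]; first | rfl | simp)
    (fun f x y => by
      show F.map f (x + y) = F.map f x + F.map f y
      rw [map_add])
    (fun n f x => by
      show F.map f (n • x) = n • F.map f x
      rw [map_zsmul])

/-- The set of relations defining the tensor product over `E = End X`: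
`(e ≫ f) ⊗ x − f ⊗ F(e)(x)`, for `e ∈ End X` (acting on `Hom(X,Y)` by precomposition
and on `F(X)` via `F`). -/
def relSet (F : 𝔄 ⥤ AddCommGrpCat.{w}) (X Y : 𝔄) : Set ((X ⟶ Y) ⊗[ℤ] (F.obj X)) :=
  {t | ∃ (e : X ⟶ X) (f : X ⟶ Y) (x : F.obj X),
    t = (e ≫ f) ⊗ₜ[ℤ] x - f ⊗ₜ[ℤ] (F.map e x)}

attribute [local instance] Abelian.hasFiniteBiproducts

lemma TensorProduct.exists_eq_sum_tmul {M N : Type*} [AddCommGroup M] [AddCommGroup N]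
    (t : M ⊗[ℤ] N) :
    ∃ (n : ℕ) (m : Fin n → M) (x : Fin n → N), t = ∑ i, m i ⊗ₜ[ℤ] x i := by
  obtain ⟨S, rfl⟩ := TensorProduct.exists_finset t
  refine ⟨S.card, fun i => (S.equivFin.symm i).1.1, fun i => (S.equivFin.symm i).1.2, ?_⟩
  rw [← Finset.sum_coe_sort, ← S.equivFin.symm.sum_comp]

lemma exists_eq_sum_smul_succAbove {K V : Type*} [DivisionRing K] [AddCommGroup V] [Module K V]
    {n : ℕ} {v : Fin (n + 1) → V} {g : Fin (n + 1) → K} (hg : ∑ i, g i • v i = 0) {j : Fin (n + 1)}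
    (hj : g j ≠ 0) : ∃ d : Fin n → K, v j = ∑ i, d i • v (j.succAbove i) := by
  refine ⟨fun i => -((g j)⁻¹ * g (j.succAbove i)), ?_⟩
  rw [Fin.sum_univ_succAbove _ j, ← eq_neg_iff_add_eq_zero] at hg
  calc v j = (g j)⁻¹ • g j • v j := by rw [smul_smul, inv_mul_cancel₀ hj, one_smul]
    _ = _ := by simp [hg, Finset.smul_sum, smul_smul]

namespace CategoryTheory

section Biproduct

variable {C : Type*} [Category C] [Preadditive C] [HasFiniteBiproducts C]

lemma comp_biproduct_desc {ι : Type} [Fintype ι] {W Y : C} {Z : ι → C} (f : ∀ i, Z i ⟶ Y)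
    (a : W ⟶ ⨁ Z) : a ≫ biproduct.desc f = ∑ i, (a ≫ biproduct.π Z i) ≫ f i := by
  simp only [biproduct.desc_eq, Preadditive.comp_sum, Category.assoc]

lemma eq_zero_of_comp_biproduct_desc_of_comp_π_last {n : ℕ} {W X Y : C}
    (f : Fin (n + 1) → (X ⟶ Y)) [Mono (biproduct.desc fun i : Fin n => f i.castSucc)]
    {a : W ⟶ ⨁ fun _ : Fin (n + 1) => X} (ha : a ≫ biproduct.desc f = 0)
    (ha' : a ≫ biproduct.π _ (Fin.last n) = 0) : a = 0 := by
  have hlift : biproduct.lift (fun i : Fin n => a ≫ biproduct.π _ i.castSucc) = 0 := by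
    rw [← cancel_mono (biproduct.desc fun i : Fin n => f i.castSucc), zero_comp,
      biproduct.lift_desc, ← ha, comp_biproduct_desc, Fin.sum_univ_castSucc, ha', zero_comp,
      add_zero]
  ext j
  refine Fin.lastCases ?_ (fun i => ?_) j
  · simpa using ha'
  · simpa using congrArg (· ≫ biproduct.π _ i) hlift

lemma eq_zero_of_sum_map_eq_zero (F : C ⥤ AddCommGrpCat.{w}) [F.PreservesZeroMorphisms]
    [F.PreservesMonomorphisms] {ι : Type} [Fintype ι] {Y : C} {Z : ι → C}
    (f : ∀ i, Z i ⟶ Y) [Mono (biproduct.desc f)] (x : ∀ i, F.obj (Z i))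
    (hx : ∑ i, F.map (f i) (x i) = 0) (j : ι) : x j = 0 := by
  set ξ := ∑ i, F.map (biproduct.ι Z i) (x i)
  have hξ : ξ = 0 := by
    refine (AddCommGrpCat.mono_iff_injective (F.map (biproduct.desc f))).mp inferInstance ?_
    simp [ξ, ← hx, ← ConcreteCategory.comp_apply, ← F.map_comp]
  have hπ : F.map (biproduct.π Z j) ξ = x j := by
    rw [map_sum, Finset.sum_eq_single j (fun i _ hij => ?_) (by simp)]
    · simp [← ConcreteCategory.comp_apply, ← F.map_comp]
    · simp [← ConcreteCategory.comp_apply, ← F.map_comp, biproduct.ι_π_ne _ hij]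
  rw [← hπ, hξ, map_zero]

end Biproduct

lemma mono_biproduct_desc_of_linearIndependent {X Y : 𝔄} [Simple X] {n : ℕ}
    (f : Fin n → (X ⟶ Y)) (hf : LinearIndependent (End X)ᵐᵒᵖ f) : Mono (biproduct.desc f) := by
  induction n with
  | zero => exact Preadditive.mono_of_cancel_zero _ fun g _ => biproduct.hom_ext _ _ (·.elim0)
  | succ n ih =>
    have : Mono (biproduct.desc fun i : Fin n => f i.castSucc) :=
      ih _ (hf.comp _ (Fin.castSucc_injective n))
    set k := kernel.ι (biproduct.desc f)
    set p := k ≫ biproduct.π _ (Fin.last n)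
    have hk {W : 𝔄} (g : W ⟶ kernel (biproduct.desc f)) (hg : g ≫ p = 0) : g ≫ k = 0 :=
      eq_zero_of_comp_biproduct_desc_of_comp_π_last f (by simp [k]) (by simpa [p] using hg)
    by_cases hp : p = 0
    · exact Abelian.mono_of_kernel_ι_eq_zero _ (by simpa using hk (𝟙 _) (by simpa using hp))
    have : Mono p := Preadditive.mono_of_cancel_zero _ fun g hg => zero_of_comp_mono k (hk g hg)
    have := isIso_of_mono_of_nonzero hp
    -- `inv p ≫ k : X ⟶ ⨁ X` is a relation among the `f i` with last coefficient `𝟙 X`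
    have hrel := Fintype.linearIndependent_iff.mp hf
      (fun i => .op (inv p ≫ k ≫ biproduct.π _ i)) ?_ (Fin.last n)
    · exact (id_nonzero X (by simpa [p] using congrArg MulOpposite.unop hrel)).elim
    · have h : (inv p ≫ k) ≫ biproduct.desc f = 0 := by simp [k]
      simpa only [comp_biproduct_desc, End.smul_left, MulOpposite.unop_op, Category.assoc] using h

lemma simple_of_mono_of_ne_zero {X : 𝔄} (hX : 𝟙 X ≠ 0)
    (h : ∀ {Y : 𝔄} (f : X ⟶ Y), f ≠ 0 → Mono f) : Simple X :=
  simple_of_cosimple X fun f _ =>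
    ⟨fun _ hf => hX ((cancel_mono f).mp (by simp [hf])),
      fun hf => have := h f hf; isIso_of_mono_of_epi f⟩

abbrev End.divisionRingOfIsIso {C : Type*} [Category C] [Preadditive C] {X : C}
    (h₁ : 𝟙 X ≠ 0) (h₂ : ∀ f : X ⟶ X, f ≠ 0 → IsIso f) : DivisionRing (End X) :=
  have : Nontrivial (End X) := ⟨⟨𝟙 X, 0, h₁⟩⟩
  DivisionRing.ofIsUnitOrEqZero fun f =>
    or_iff_not_imp_right.mpr fun hf => (isUnit_iff_isIso f).mpr (h₂ f hf)

lemma exists_linearMap_apply_ne_zero {C : Type*} [Category C] [Preadditive C]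
    {X Y : C} (h₁ : 𝟙 X ≠ 0) (h₂ : ∀ f : X ⟶ X, f ≠ 0 → IsIso f) {q : X ⟶ Y} (hq : q ≠ 0) :
    ∃ Λ : (X ⟶ Y) →ₗ[(End X)ᵐᵒᵖ] (X ⟶ X), Λ q ≠ 0 := by
  let := End.divisionRingOfIsIso h₁ h₂
  obtain ⟨φ, hφ⟩ := Module.Projective.exists_dual_ne_zero (End X)ᵐᵒᵖ hq
  exact ⟨(Preadditive.homSelfLinearEquivEndMulOpposite X).symm.toLinearMap ∘ₗ φ,
    fun h => hφ (MulOpposite.unop_injective h)⟩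

end CategoryTheory

section Evaluation

variable (F : 𝔄 ⥤ AddCommGrpCat.{w})

@[simp]
lemma evTensor_tmul [F.Additive] {X Y : 𝔄} (f : X ⟶ Y) (x : F.obj X) :
    evTensor F X Y (f ⊗ₜ[ℤ] x) = F.map f x :=
  rfl

lemma span_relSet_le_ker_evTensor [F.Additive] (X Y : 𝔄) :
    Submodule.span ℤ (relSet F X Y) ≤ LinearMap.ker (evTensor F X Y) := by
  rw [Submodule.span_le]
  rintro _ ⟨e, f, x, rfl⟩
  simp

lemma sum_tmul_sub_sum_tmul_succAbove_mem_span_relSet {X Y : 𝔄} {n : ℕ}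
    (f : Fin (n + 1) → (X ⟶ Y)) (x : Fin (n + 1) → F.obj X) {j : Fin (n + 1)}
    {d : Fin n → (End X)ᵐᵒᵖ} (hj : f j = ∑ i, d i • f (j.succAbove i)) :
    ∑ i, f i ⊗ₜ[ℤ] x i -
        ∑ i, f (j.succAbove i) ⊗ₜ[ℤ] (x (j.succAbove i) + F.map (d i).unop (x j)) ∈
      Submodule.span ℤ (relSet F X Y) := by
  have hsum : ∑ i, f i ⊗ₜ[ℤ] x i -
        ∑ i, f (j.succAbove i) ⊗ₜ[ℤ] (x (j.succAbove i) + F.map (d i).unop (x j)) =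
      ∑ i, (((d i).unop ≫ f (j.succAbove i)) ⊗ₜ[ℤ] x j -
        f (j.succAbove i) ⊗ₜ[ℤ] F.map (d i).unop (x j)) := by
    rw [Fin.sum_univ_succAbove _ j, hj, TensorProduct.sum_tmul]
    simp only [TensorProduct.tmul_add, Finset.sum_add_distrib, Finset.sum_sub_distrib,
      End.smul_left]
    abel
  rw [hsum]
  exact Submodule.sum_mem _ fun i _ => Submodule.subset_span ⟨(d i).unop, _, x j, rfl⟩

lemma sum_tmul_mem_span_relSet_of_evTensor_eq_zero [F.Additive] [F.PreservesMonomorphisms]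
    {X Y : 𝔄} [Simple X] {n : ℕ} (f : Fin n → (X ⟶ Y)) (x : Fin n → F.obj X)
    (hx : evTensor F X Y (∑ i, f i ⊗ₜ[ℤ] x i) = 0) :
    ∑ i, f i ⊗ₜ[ℤ] x i ∈ Submodule.span ℤ (relSet F X Y) := by
  induction n with
  | zero => simp
  | succ n ih =>
    by_cases hf : LinearIndependent (End X)ᵐᵒᵖ f
    · have := mono_biproduct_desc_of_linearIndependent f hf
      have hx0 := eq_zero_of_sum_map_eq_zero F f x (by simpa using hx)
      simp [hx0]
    obtain ⟨g, hg, j, hj⟩ := Fintype.not_linearIndependent_iff.mp hf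
    obtain ⟨d, hd⟩ := exists_eq_sum_smul_succAbove hg hj
    have hsub := sum_tmul_sub_sum_tmul_succAbove_mem_span_relSet F f x hd
    have hrest := ih _ _ (by
      rw [← sub_sub_cancel (∑ i, f i ⊗ₜ[ℤ] x i) (∑ i : Fin n, _), map_sub, hx,
        span_relSet_le_ker_evTensor F X Y hsub, sub_zero])
    simpa using add_mem hsub hrest

lemma map_mem_span_relSet {X Y Z : 𝔄} (Λ : (X ⟶ Y) →ₗ[(End X)ᵐᵒᵖ] (X ⟶ Z))
    {t : (X ⟶ Y) ⊗[ℤ] F.obj X} (ht : t ∈ Submodule.span ℤ (relSet F X Y)) :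
    TensorProduct.map Λ.toAddMonoidHom.toIntLinearMap LinearMap.id t ∈
      Submodule.span ℤ (relSet F X Z) := by
  induction ht using Submodule.span_induction with
  | mem _ h =>
    obtain ⟨e, f, x, rfl⟩ := h
    have hΛ : Λ (e ≫ f) = e ≫ Λ f := Λ.map_smul (MulOpposite.op e) f
    exact Submodule.subset_span ⟨e, Λ f, x, by simp [hΛ]⟩
  | zero => simp
  | add _ _ _ _ h₁ h₂ => simpa using add_mem h₁ h₂
  | smul n _ _ h => simpa using Submodule.smul_mem _ n h

lemma injective_map_of_ne_zero [F.Additive] {X Y : 𝔄} (h₁ : 𝟙 X ≠ 0)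
    (h₂ : ∀ f : X ⟶ X, f ≠ 0 → IsIso f)
    (hker : LinearMap.ker (evTensor F X Y) = Submodule.span ℤ (relSet F X Y))
    {q : X ⟶ Y} (hq : q ≠ 0) : Function.Injective (F.map q) := by
  rw [injective_iff_map_eq_zero]
  intro x hx
  obtain ⟨Λ, hΛ⟩ := exists_linearMap_apply_ne_zero h₁ h₂ hq
  have hmem : q ⊗ₜ[ℤ] x ∈ Submodule.span ℤ (relSet F X Y) := by rwa [← hker]
  have hΛx : F.map (Λ q) x = 0 :=
    span_relSet_le_ker_evTensor F X X (map_mem_span_relSet F Λ hmem)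
  have := h₂ _ hΛ
  simpa using congrArg (F.map (inv (Λ q))) hΛx

end Evaluation

/-- Injectivity of `Hom(X,Y) ⊗_{End X} F(X) → F(Y)` is encoded on the `ℤ`-tensor product: the
kernel of `evTensor` is the span of the balancing relations `relSet`. -/
theorem simple_iff_division_ring_and_evaluation_injective_general
    (F : 𝔄 ⥤ AddCommGrpCat.{w}) [F.Additive] [F.Faithful]
    [PreservesFiniteLimits F] (X : 𝔄) :
    Simple X ↔
      ((𝟙 X ≠ (0 : X ⟶ X)) ∧ ∀ f : X ⟶ X, f ≠ 0 → IsIso f) ∧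
      (∀ Y : 𝔄, LinearMap.ker (evTensor F X Y) = Submodule.span ℤ (relSet F X Y)) := by
  constructor
  · intro hX
    refine ⟨⟨id_nonzero X, fun f hf => isIso_of_hom_simple hf⟩, fun Y => ?_⟩
    refine le_antisymm (fun t ht => ?_) (span_relSet_le_ker_evTensor F X Y)
    obtain ⟨n, f, x, rfl⟩ := TensorProduct.exists_eq_sum_tmul t
    exact sum_tmul_mem_span_relSet_of_evTensor_eq_zero F f x ht
  · rintro ⟨⟨h₁, h₂⟩, hker⟩
    refine simple_of_mono_of_ne_zero h₁ fun q hq => F.mono_of_mono_map ?_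
    exact (AddCommGrpCat.mono_iff_injective _).mpr (injective_map_of_ne_zero F h₁ h₂ (hker _) hq)

/-- An object `X` of an abelian category `𝔄` is simple iff `End_𝔄(X)` is a division ring
and, for every object `Y`, the evaluation map `Hom_𝔄(X,Y) ⊗_{End X} F(X) → F(Y)` is
injective (the latter being expressed by saying that the kernel of the evaluation map on
the `ℤ`-tensor product is exactly the span of the balancing relations over `End X`).
Here `F : 𝔄 → Ab` is an additive, faithful, exact functor. -/
theorem simple_iff_division_ring_and_evaluation_injective
    (F : 𝔄 ⥤ AddCommGrpCat.{w}) [F.Additive] [F.Faithful]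
    [PreservesFiniteLimits F] [PreservesFiniteColimits F] (X : 𝔄) :
    Simple X ↔
      ((𝟙 X ≠ (0 : X ⟶ X)) ∧ ∀ f : X ⟶ X, f ≠ 0 → IsIso f) ∧
      (∀ Y : 𝔄, LinearMap.ker (evTensor F X Y) = Submodule.span ℤ (relSet F X Y)) :=
  simple_iff_division_ring_and_evaluation_injective_general F X
end
end

section
/- Let A be a simple D-module algebra. Then the R-linear map β : A ⊗_{A^D} A → Hom_R(D, A) defined by β(a ⊗ b)(d) = a·(d·b) is injective; that is, if a_1,…,a_n, b_1,…,b_n ∈ A satisfy Σ_i a_i·(d·b_i) = 0 for every d ∈ D, then Σ_i a_i ⊗ b_i = 0 in A ⊗_{A^D} A. -/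
/-!
The constants `K = A^D` form a field: for a constant `k ≠ 0`, both the annihilator of `k` and
`k A` are `D`-stable ideals, so `k` is a non-zero-divisor with an inverse, which is again constant.

Write the tensor as `∑ₖ wₖ ⊗ cₖ` with `(wₖ)` linearly independent over `K`. The tuples `c` with
`∑ₖ wₖ (d • cₖ) = 0` for all `d` form an `A`-submodule of `Aⁿ` stable under `D` (the module
algebra axiom is what makes it closed under multiplication by `A`). Among its nonzero elements
take one with minimal support; its entries at a fixed position form a nonzero `D`-stable ideal,
so we may assume one entry is `1`. Then `d • c - ε(d) c` has smaller support, hence vanishes,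
so every entry of `c` is constant, and `∑ₖ wₖ cₖ = 0` contradicts the independence of `(wₖ)`.
-/

open scoped TensorProduct

noncomputable section

variable (R D A : Type*) [Field R] [Ring D] [Bialgebra R D]
  [CommRing A] [Algebra R A] [Module D A] [IsScalarTower R D A]

def measureAux (a b : A) : D ⊗[R] D →ₗ[R] A :=
  TensorProduct.lift <| LinearMap.mk₂ R (fun d e => (d • a) * (e • b))
    (fun d d' e => by
      show ((d + d') • a) * (e • b) = (d • a) * (e • b) + (d' • a) * (e • b)
      rw [add_smul, add_mul])
    (fun r d e => by
      show ((r • d) • a) * (e • b) = r • ((d • a) * (e • b))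
      rw [smul_assoc, smul_mul_assoc])
    (fun d e e' => by
      show (d • a) * ((e + e') • b) = (d • a) * (e • b) + (d • a) * (e' • b)
      rw [add_smul, mul_add])
    (fun r d e => by
      show (d • a) * ((r • e) • b) = r • ((d • a) * (e • b))
      rw [smul_assoc, mul_smul_comm])

lemma smul_comm_RD (d : D) (r : R) (x : A) : d • (r • x) = r • (d • x) := by
  rw [← algebraMap_smul D r x, ← mul_smul, ← Algebra.commutes, mul_smul, algebraMap_smul]

/-- The subalgebra `A^D` of constants of a `D`-module algebra. -/
def constants
    (hone : ∀ d : D, d • (1 : A) = (Coalgebra.counit (R := R) d) • (1 : A))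
    (hmul : ∀ (d : D) (a b : A),
      d • (a * b) = measureAux R D A a b (Coalgebra.comul (R := R) d)) :
    Subalgebra R A where
  carrier := {a | ∀ d : D, d • a = (Coalgebra.counit (R := R) d) • a}
  add_mem' := by
    intro a b ha hb d
    rw [smul_add, ha d, hb d, smul_add]
  mul_mem' := by
    intro a b ha hb d
    rw [hmul]
    have key : measureAux R D A a b =
        LinearMap.smulRight ((LinearMap.mul' R R).comp
          (TensorProduct.map (Coalgebra.counit (R := R)) (Coalgebra.counit (R := R)))) (a * b) := by
      apply TensorProduct.ext'
      intro x y
      simp only [measureAux, TensorProduct.lift.tmul, LinearMap.mk₂_apply,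
        LinearMap.smulRight_apply, LinearMap.comp_apply, TensorProduct.map_tmul,
        LinearMap.mul'_apply]
      rw [ha x, hb y, smul_mul_assoc, mul_smul_comm, smul_smul]
    rw [key]
    simp only [LinearMap.smulRight_apply, LinearMap.comp_apply]
    congr 1
    rw [← LinearMap.rTensor_comp_lTensor, LinearMap.comp_apply,
      Coalgebra.lTensor_counit_comul (R := R) d, LinearMap.rTensor_tmul,
      LinearMap.mul'_apply, mul_one]
  algebraMap_mem' := by
    intro r d
    rw [Algebra.algebraMap_eq_smul_one, smul_comm_RD, hone d, smul_comm]

universe u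

theorem exists_linearIndependent_forall_eq_sum_smul {K M : Type*} {ι : Type u} [DivisionRing K]
    [AddCommGroup M] [Module K M] [Finite ι] (v : ι → M) :
    ∃ (κ : Type u) (_ : Fintype κ) (w : κ → M) (T : ι → κ → K),
      LinearIndependent K w ∧ ∀ i, v i = ∑ k, T i k • w k := by
  obtain ⟨κ, f, hf, hspan, hli⟩ := exists_linearIndependent' K v
  have : Finite κ := Finite.of_injective f hf
  have hmem (i : ι) : v i ∈ Submodule.span K (Set.range (v ∘ f)) :=
    hspan ▸ Submodule.subset_span (Set.mem_range_self i)
  let : Fintype κ := Fintype.ofFinite κ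
  choose T hT using fun i => (Submodule.mem_span_range_iff_exists_fun K).mp (hmem i)
  exact ⟨κ, inferInstance, v ∘ f, T, hli, fun i => (hT i).symm⟩

theorem sum_tmul_eq_sum_tmul_of_eq_sum_smul {K M N ι κ : Type*} [CommSemiring K]
    [AddCommMonoid M] [Module K M] [AddCommMonoid N] [Module K N] [Fintype ι] [Fintype κ]
    {v : ι → M} {w : κ → M} (T : ι → κ → K) (hv : ∀ i, v i = ∑ k, T i k • w k) (b : ι → N) :
    ∑ i, v i ⊗ₜ[K] b i = ∑ k, w k ⊗ₜ[K] ∑ i, T i k • b i := by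
  simp only [hv, TensorProduct.sum_tmul, TensorProduct.tmul_sum, TensorProduct.smul_tmul]
  exact Finset.sum_comm

section ModuleAlgebra

variable {R D A}

theorem smul_constant_mul
    (hmul : ∀ (d : D) (a b : A),
      d • (a * b) = measureAux R D A a b (Coalgebra.comul (R := R) d))
    {k : A} (hk : ∀ d : D, d • k = Coalgebra.counit (R := R) d • k) (x : A) (d : D) :
    d • (k * x) = k * (d • x) := by
  have key (t : D ⊗[R] D) : measureAux R D A k x t =
      k * (TensorProduct.lid R D (Coalgebra.counit.rTensor D t) • x) := by
    induction t using TensorProduct.induction_on with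
    | zero => simp
    | tmul e f => simp [measureAux, hk e, smul_assoc]
    | add s t hs ht => simp [hs, ht, add_smul, mul_add]
  rw [hmul, key, Coalgebra.rTensor_counit_comul, TensorProduct.lid_tmul, one_smul]

variable {ι : Type*}

theorem exists_mem_apply_eq_one
    (hsimple : ∀ I : Ideal A, (∀ d : D, ∀ a ∈ I, d • a ∈ I) → I = ⊥ ∨ I = ⊤)
    {N : Submodule A (ι → A)} (hN : ∀ d : D, ∀ c ∈ N, d • c ∈ N)
    {c : ι → A} (hc : c ∈ N) {j : ι} (hcj : c j ≠ 0) : ∃ c' ∈ N, c' j = 1 := by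
  have hstable : ∀ d : D, ∀ x ∈ N.map (LinearMap.proj j), d • x ∈ N.map (LinearMap.proj j) := by
    rintro d _ ⟨c, hc, rfl⟩
    exact ⟨d • c, hN d c hc, rfl⟩
  rcases hsimple _ hstable with hbot | htop
  · exact absurd ((Submodule.mem_bot A).mp (hbot ▸ ⟨c, hc, rfl⟩)) hcj
  · have h1 : (1 : A) ∈ N.map (LinearMap.proj j) := htop ▸ Submodule.mem_top
    obtain ⟨c', hc', hc'j⟩ := h1
    exact ⟨c', hc', hc'j⟩

variable [Fintype ι]

theorem sum_mul_smul_mul_eq_zero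
    (hmul : ∀ (d : D) (a b : A),
      d • (a * b) = measureAux R D A a b (Coalgebra.comul (R := R) d))
    {a c : ι → A} (hc : ∀ d : D, ∑ i, a i * (d • c i) = 0) (x : A) (d : D) :
    ∑ i, a i * (d • (x * c i)) = 0 := by
  simp_rw [hmul]
  induction Coalgebra.comul (R := R) d using TensorProduct.induction_on with
  | zero => simp
  | tmul e f =>
    simp only [measureAux, TensorProduct.lift.tmul, LinearMap.mk₂_apply]
    simp_rw [mul_left_comm (a _), ← Finset.mul_sum, hc f, mul_zero]
  | add s t hs ht => simp [mul_add, Finset.sum_add_distrib, hs, ht]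

def solutions
    (hmul : ∀ (d : D) (a b : A),
      d • (a * b) = measureAux R D A a b (Coalgebra.comul (R := R) d))
    (a : ι → A) : Submodule A (ι → A) where
  carrier := {c | ∀ d : D, ∑ i, a i * (d • c i) = 0}
  add_mem' hc hc' d := by simp [smul_add, mul_add, Finset.sum_add_distrib, hc d, hc' d]
  zero_mem' d := by simp
  smul_mem' x _ hc := sum_mul_smul_mul_eq_zero hmul hc x

theorem smul_mem_solutions
    (hmul : ∀ (d : D) (a b : A),
      d • (a * b) = measureAux R D A a b (Coalgebra.comul (R := R) d))
    {a c : ι → A} (hc : c ∈ solutions hmul a) (e : D) : e • c ∈ solutions hmul a := fun d => by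
  simpa only [Pi.smul_apply, mul_smul] using hc (d * e)

theorem eq_zero_of_constant_mul_eq_zero
    (hmul : ∀ (d : D) (a b : A),
      d • (a * b) = measureAux R D A a b (Coalgebra.comul (R := R) d))
    (hsimple : ∀ I : Ideal A, (∀ d : D, ∀ a ∈ I, d • a ∈ I) → I = ⊥ ∨ I = ⊤)
    {k : A} (hk : ∀ d : D, d • k = Coalgebra.counit (R := R) d • k) (hk0 : k ≠ 0)
    {x : A} (hx : k * x = 0) : x = 0 := by
  set I : Ideal A := LinearMap.ker (LinearMap.mulLeft A k)
  have hstable : ∀ d : D, ∀ y ∈ I, d • y ∈ I := by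
    intro d y hy
    rw [LinearMap.mem_ker, LinearMap.mulLeft_apply] at hy ⊢
    rw [← smul_constant_mul hmul hk, hy, smul_zero]
  rcases hsimple I hstable with hbot | htop
  · exact (Submodule.mem_bot A).mp (hbot ▸ hx)
  · have h1 : (1 : A) ∈ I := htop ▸ Submodule.mem_top
    exact absurd (by simpa [I] using h1) hk0

theorem exists_constant_mul_eq_one
    (hmul : ∀ (d : D) (a b : A),
      d • (a * b) = measureAux R D A a b (Coalgebra.comul (R := R) d))
    (hsimple : ∀ I : Ideal A, (∀ d : D, ∀ a ∈ I, d • a ∈ I) → I = ⊥ ∨ I = ⊤)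
    {k : A} (hk : ∀ d : D, d • k = Coalgebra.counit (R := R) d • k) (hk0 : k ≠ 0) :
    ∃ y : A, k * y = 1 := by
  have hstable : ∀ d : D, ∀ y ∈ Ideal.span {k}, d • y ∈ Ideal.span {k} := by
    intro d y hy
    obtain ⟨z, rfl⟩ := Ideal.mem_span_singleton'.mp hy
    rw [mul_comm, smul_constant_mul hmul hk, mul_comm]
    exact Ideal.mul_mem_left _ _ (Ideal.mem_span_singleton_self k)
  rcases hsimple _ hstable with hbot | htop
  · exact absurd (Ideal.span_singleton_eq_bot.mp hbot) hk0
  · obtain ⟨y, hy⟩ := Ideal.mem_span_singleton'.mp (htop ▸ Submodule.mem_top (x := (1 : A)))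
    exact ⟨y, by rw [mul_comm, hy]⟩

theorem constants_isField
    (hone : ∀ d : D, d • (1 : A) = (Coalgebra.counit (R := R) d) • (1 : A))
    (hmul : ∀ (d : D) (a b : A),
      d • (a * b) = measureAux R D A a b (Coalgebra.comul (R := R) d))
    [Nontrivial A]
    (hsimple : ∀ I : Ideal A, (∀ d : D, ∀ a ∈ I, d • a ∈ I) → I = ⊥ ∨ I = ⊤) :
    IsField (constants R D A hone hmul) := by
  refine ⟨⟨0, 1, fun h => zero_ne_one (congrArg Subtype.val h)⟩, mul_comm, fun {k} hk0 => ?_⟩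
  have hk0' : (k : A) ≠ 0 := fun h => hk0 (Subtype.ext h)
  obtain ⟨y, hy⟩ := exists_constant_mul_eq_one hmul hsimple k.2 hk0'
  have hy_const (d : D) : d • y = Coalgebra.counit (R := R) d • y := by
    refine sub_eq_zero.mp (eq_zero_of_constant_mul_eq_zero hmul hsimple k.2 hk0' ?_)
    rw [mul_sub, ← smul_constant_mul hmul k.2, hy, mul_smul_comm, hy, hone, sub_self]
  exact ⟨⟨y, hy_const⟩, Subtype.ext hy⟩

theorem solutions_inf_pi_eq_bot
    (hone : ∀ d : D, d • (1 : A) = (Coalgebra.counit (R := R) d) • (1 : A))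
    (hmul : ∀ (d : D) (a b : A),
      d • (a * b) = measureAux R D A a b (Coalgebra.comul (R := R) d))
    [Nontrivial A]
    (hsimple : ∀ I : Ideal A, (∀ d : D, ∀ a ∈ I, d • a ∈ I) → I = ⊥ ∨ I = ⊤)
    {a : ι → A} (ha : LinearIndependent (constants R D A hone hmul) a) (S : Finset ι) :
    solutions hmul a ⊓ Submodule.pi (↑S)ᶜ (fun _ => ⊥) = ⊥ := by
  classical
  induction S using Finset.strongInduction with
  | H S ih =>
  set N := solutions hmul a ⊓ Submodule.pi (↑S)ᶜ (fun _ => (⊥ : Submodule A A))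
  refine (Submodule.eq_bot_iff N).mpr fun c hc => ?_
  by_contra hne
  obtain ⟨j, hcj⟩ := Function.ne_iff.mp hne
  have hN : ∀ d : D, ∀ c ∈ N, d • c ∈ N := fun d c ⟨hsol, hpi⟩ =>
    ⟨smul_mem_solutions hmul hsol d, fun i hi => by simp [(Submodule.mem_bot A).mp (hpi i hi)]⟩
  obtain ⟨c', ⟨hc'sol, hc'pi⟩, hc'j⟩ := exists_mem_apply_eq_one hsimple hN hc hcj
  have hjS : j ∈ S := by
    by_contra hj
    exact hcj ((Submodule.mem_bot A).mp (hc.2 j hj))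
  have hconst (i : ι) (d : D) : d • c' i = Coalgebra.counit (R := R) d • c' i := by
    have hmem : d • c' - Coalgebra.counit (R := R) d • c' ∈
        solutions hmul a ⊓ Submodule.pi (↑(S.erase j))ᶜ (fun _ => ⊥) := by
      refine ⟨sub_mem (smul_mem_solutions hmul hc'sol d)
        (Submodule.smul_of_tower_mem _ _ hc'sol), fun i hi => ?_⟩
      by_cases hij : i = j
      · subst hij
        simp [hc'j, hone]
      · have : c' i = 0 := (Submodule.mem_bot A).mp (hc'pi i (by simpa [hij] using hi))
        simp [this]
    rw [ih _ (Finset.erase_ssubset hjS)] at hmem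
    exact sub_eq_zero.mp (congrFun ((Submodule.mem_bot A).mp hmem) i)
  have hsum : ∑ i, (⟨c' i, hconst i⟩ : constants R D A hone hmul) • a i = 0 := by
    simpa [Subalgebra.smul_def, mul_comm] using hc'sol 1
  have hzero : c' j = 0 := congrArg Subtype.val (Fintype.linearIndependent_iff.mp ha _ hsum j)
  exact one_ne_zero (hc'j.symm.trans hzero)

theorem solutions_eq_bot
    (hone : ∀ d : D, d • (1 : A) = (Coalgebra.counit (R := R) d) • (1 : A))
    (hmul : ∀ (d : D) (a b : A),
      d • (a * b) = measureAux R D A a b (Coalgebra.comul (R := R) d))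
    [Nontrivial A]
    (hsimple : ∀ I : Ideal A, (∀ d : D, ∀ a ∈ I, d • a ∈ I) → I = ⊥ ∨ I = ⊤)
    {a : ι → A} (ha : LinearIndependent (constants R D A hone hmul) a) :
    solutions hmul a = ⊥ := by
  simpa using solutions_inf_pi_eq_bot hone hmul hsimple ha Finset.univ

end ModuleAlgebra

/-- For a simple `D`-module algebra `A`, the map
`β : A ⊗_{A^D} A → Hom_R(D,A)`, `β(a ⊗ b)(d) = a (d • b)`, is injective:
if `Σᵢ aᵢ (d • bᵢ) = 0` for every `d ∈ D`, then `Σᵢ aᵢ ⊗ bᵢ = 0` in `A ⊗_{A^D} A`. -/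
theorem tensor_eq_zero_of_forall_eval_eq_zero
    (hone : ∀ d : D, d • (1 : A) = (Coalgebra.counit (R := R) d) • (1 : A))
    (hmul : ∀ (d : D) (a b : A),
      d • (a * b) = measureAux R D A a b (Coalgebra.comul (R := R) d))
    (hnt : Nontrivial A)
    (hsimple : ∀ I : Ideal A, (∀ d : D, ∀ a ∈ I, d • a ∈ I) → I = ⊥ ∨ I = ⊤)
    (n : ℕ) (a b : Fin n → A)
    (h : ∀ d : D, ∑ i, a i * (d • b i) = 0) :
    ∑ i, (a i) ⊗ₜ[constants R D A hone hmul] (b i) =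
      (0 : A ⊗[constants R D A hone hmul] A) := by
  have := hnt
  let : Field (constants R D A hone hmul) := (constants_isField hone hmul hsimple).toField
  obtain ⟨κ, _, w, T, hw, ha⟩ :=
    exists_linearIndependent_forall_eq_sum_smul (K := constants R D A hone hmul) a
  have hsol : (fun k => ∑ i, T i k • b i) ∈ solutions hmul w := fun d => by
    calc ∑ k, w k * (d • ∑ i, T i k • b i)
        = ∑ k, ∑ i, (T i k • w k) * (d • b i) := by
          simp only [Finset.smul_sum, Finset.mul_sum, Subalgebra.smul_def, smul_eq_mul,
            smul_constant_mul hmul (T _ _).2, mul_left_comm, mul_assoc]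
      _ = ∑ i, a i * (d • b i) := by
          rw [Finset.sum_comm]
          simp only [ha, Finset.sum_mul]
      _ = 0 := h d
  rw [solutions_eq_bot hone hmul hsimple hw, Submodule.mem_bot] at hsol
  rw [sum_tmul_eq_sum_tmul_of_eq_sum_smul T ha b]
  simp [congrFun hsol]
end
end

section
/- Let K ⊆ L be an extension of fields which are both D-module algebras, with K a D-stable subalgebra of L. If x ∈ L^D (i.e. d·x = ε(d)x for all d ∈ D) is algebraic over K, then every coefficient of the minimal polynomial of x over K lies in K^D; in particular, x is algebraic over the subfield K^D. -/
/-!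
Write the minimal polynomial of `x` as `Xⁿ + ∑_{i<n} cᵢ Xⁱ`. Since `x` is constant, so are its
powers, and they can be pulled out of the action; applying `d ∈ D` to `xⁿ + ∑ cᵢ xⁱ = 0` and
subtracting `ε(d)` times the same relation leaves `∑ (d • cᵢ - ε(d) cᵢ) xⁱ = 0`. The powers
`1, x, …, xⁿ⁻¹` are linearly independent over `K`, so every `cᵢ` is constant; the leading
coefficient `1` is constant because `D` measures `K`.
-/

open scoped TensorProduct

noncomputable section

section Setup

variable (R D A : Type*) [Field R] [Ring D] [Bialgebra R D]
  [CommRing A] [Algebra R A] [Module D A] [IsScalarTower R D A]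

/-- The action of `D` on `A` measures `A` (so `A` is a `D`-module algebra). -/
def Measures : Prop :=
  (∀ d : D, d • (1 : A) = (Coalgebra.counit (R := R) d) • (1 : A)) ∧
  (∀ (d : D) (a b : A), d • (a * b) = measureAux R D A a b (Coalgebra.comul (R := R) d))

end Setup

section Constants

def IsConst (R D : Type*) {A : Type*} [CommSemiring R] [AddCommMonoid D] [Module R D]
    [CoalgebraStruct R D] [SMul D A] [SMul R A] (a : A) : Prop :=
  ∀ d : D, d • a = Coalgebra.counit (R := R) d • a

variable {R D A : Type*} [Field R] [Ring D] [Bialgebra R D]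
  [CommRing A] [Algebra R A] [Module D A] [IsScalarTower R D A]

theorem Measures.isConst_one (h : Measures R D A) : IsConst R D (1 : A) :=
  h.1

/-- As `b` is constant, the Sweedler sum collapses by `(id ⊗ ε) ∘ Δ = id`. -/
theorem Measures.smul_mul_of_isConst (h : Measures R D A) (d : D) (a : A) {b : A}
    (hb : IsConst R D b) : d • (a * b) = (d • a) * b := by
  let f : D →ₗ[R] A :=
    { toFun := fun s => (s • a) * b
      map_add' := fun s t => by simp only [add_smul, add_mul]
      map_smul' := fun r s => by simp only [smul_assoc, smul_mul_assoc, RingHom.id_apply] }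
  have hcollapse : measureAux R D A a b =
      f ∘ₗ (TensorProduct.rid R D).toLinearMap ∘ₗ
        LinearMap.lTensor D (Coalgebra.counit (R := R)) := by
    refine TensorProduct.ext' fun s t => ?_
    simp [measureAux, f, hb t, smul_assoc]
  rw [h.2, hcollapse]
  simp [Coalgebra.lTensor_counit_comul, f]

theorem Measures.isConst_pow (h : Measures R D A) {x : A} (hx : IsConst R D x) :
    ∀ n : ℕ, IsConst R D (x ^ n)
  | 0 => by simpa using h.isConst_one
  | n + 1 => fun d => by
    rw [pow_succ', h.smul_mul_of_isConst d x (h.isConst_pow hx n), hx, smul_mul_assoc]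

end Constants

section Extension

variable {R D K L : Type*} [Field R] [Ring D] [Bialgebra R D]
  [Field K] [Module D K] [Field L] [Algebra R L] [Module D L] [IsScalarTower R D L]
  [Algebra K L]

theorem Measures.smul_sum_smul_of_isConst {ι : Type*} (hL : Measures R D L)
    (hcompat : ∀ (d : D) (c : K), d • (algebraMap K L c) = algebraMap K L (d • c))
    (s : Finset ι) (c : ι → K) {b : ι → L} (hb : ∀ i, IsConst R D (b i)) (d : D) :
    d • ∑ i ∈ s, c i • b i = ∑ i ∈ s, (d • c i) • b i := by
  rw [Finset.smul_sum]
  refine Finset.sum_congr rfl fun i _ => ?_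
  rw [Algebra.smul_def, hL.smul_mul_of_isConst d _ (hb i), hcompat, ← Algebra.smul_def]

variable [Algebra R K] [IsScalarTower R K L]

theorem isConst_minpoly_coeff_of_lt_natDegree (hL : Measures R D L)
    (hcompat : ∀ (d : D) (c : K), d • (algebraMap K L c) = algebraMap K L (d • c))
    {x : L} (hx : IsConst R D x) (hint : IsIntegral K x) {m : ℕ}
    (hm : m < (minpoly K x).natDegree) : IsConst R D ((minpoly K x).coeff m) := by
  intro d
  set n := (minpoly K x).natDegree
  set c : Fin n → K := fun i => (minpoly K x).coeff i
  have hroot : x ^ n + ∑ i, c i • x ^ (i : ℕ) = 0 := by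
    rw [Fin.sum_univ_eq_sum_range (fun i => (minpoly K x).coeff i • x ^ i)]
    have := congrArg (Polynomial.aeval x) (minpoly.monic hint).as_sum
    rw [minpoly.aeval] at this
    simpa [Algebra.smul_def] using this.symm
  have hpow := hL.isConst_pow hx
  have hd : Coalgebra.counit (R := R) d • x ^ n + ∑ i, (d • c i) • x ^ (i : ℕ) = 0 := by
    rw [← hpow n d, ← hL.smul_sum_smul_of_isConst hcompat _ c (b := fun i : Fin n => x ^ (i : ℕ))
      (fun i => hpow i), ← smul_add, hroot, smul_zero]
  have hε : Coalgebra.counit (R := R) d • x ^ n +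
      ∑ i, (Coalgebra.counit (R := R) d • c i) • x ^ (i : ℕ) = 0 := by
    simp only [smul_assoc, ← Finset.smul_sum, ← smul_add, hroot, smul_zero]
  have hdiff : ∑ i, (d • c i - Coalgebra.counit (R := R) d • c i) • x ^ (i : ℕ) = 0 := by
    simp only [sub_smul, Finset.sum_sub_distrib]
    linear_combination hd - hε
  exact sub_eq_zero.1 (Fintype.linearIndependent_iff.1 (linearIndependent_pow x) _ hdiff ⟨m, hm⟩)

theorem isConst_minpoly_coeff [IsScalarTower R D K] (hK : Measures R D K) (hL : Measures R D L)
    (hcompat : ∀ (d : D) (c : K), d • (algebraMap K L c) = algebraMap K L (d • c))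
    {x : L} (hx : IsConst R D x) (hint : IsIntegral K x) (m : ℕ) :
    IsConst R D ((minpoly K x).coeff m) := by
  rcases lt_trichotomy m (minpoly K x).natDegree with hm | rfl | hm
  · exact isConst_minpoly_coeff_of_lt_natDegree hL hcompat hx hint hm
  · rw [(minpoly.monic hint).coeff_natDegree]
    exact hK.isConst_one
  · intro d
    rw [Polynomial.coeff_eq_zero_of_natDegree_lt hm, smul_zero, smul_zero]

end Extension

/-- If `K ⊆ L` is an extension of `D`-module fields with `K` `D`-stable and
`x ∈ L^D` is algebraic over `K`, then every coefficient of the minimal polynomial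
of `x` over `K` is a constant; in particular `x` is algebraic over `K^D` (it is a
root of a nonzero polynomial all of whose coefficients are constants). -/
theorem minpoly_coeff_isConst
    (R D K L : Type*) [Field R] [Ring D] [Bialgebra R D]
    [Field K] [Algebra R K] [Module D K] [IsScalarTower R D K]
    [Field L] [Algebra R L] [Module D L] [IsScalarTower R D L]
    [Algebra K L] [IsScalarTower R K L]
    (hK : Measures R D K) (hL : Measures R D L)
    (hcompat : ∀ (d : D) (c : K), d • (algebraMap K L c) = algebraMap K L (d • c))
    (x : L) (hx : ∀ d : D, d • x = (Coalgebra.counit (R := R) d) • x)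
    (halg : IsAlgebraic K x) :
    (∀ (m : ℕ) (d : D),
        d • ((minpoly K x).coeff m) =
          (Coalgebra.counit (R := R) d) • ((minpoly K x).coeff m)) ∧
    (∃ p : Polynomial K, p ≠ 0 ∧
        (∀ (m : ℕ) (d : D),
          d • (p.coeff m) = (Coalgebra.counit (R := R) d) • (p.coeff m)) ∧
        Polynomial.aeval x p = 0) := by
  have hcoeff := isConst_minpoly_coeff hK hL hcompat hx halg.isIntegral
  exact ⟨hcoeff, minpoly K x, minpoly.ne_zero halg.isIntegral, hcoeff, minpoly.aeval K x⟩
end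
end
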